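/- arXiv:1008.0192 — 5 statements merged into one kernel-verified Lean document; each statement's English description precedes it below -/
import Mathlib

section
/- Let ψ be a branching mechanism of Lévy–Khintchine form and set ψ̃(λ) = ψ(λ)/λ for λ > 0 (with ψ̃(0) = α = ψ'(0)). Then for all λ ≥ 0: ψ̃(λ) ≤ ψ'(λ) ≤ 4 ψ̃(λ). -/
open MeasureTheory Real Set

/-- Pointwise: e^{-x} - 1 + x ≤ (1 - e^{-x}) x for x ≥ 0. -/
lemma psit_lemA {x : ℝ} (hx : 0 ≤ x) :
    Real.exp (-x) - 1 + x ≤ (1 - Real.exp (-x)) * x := by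
  have h := Real.add_one_le_exp x
  have hmul : (x + 1) * Real.exp (-x) ≤ Real.exp x * Real.exp (-x) :=
    mul_le_mul_of_nonneg_right (by linarith) (Real.exp_pos (-x)).le
  rw [← Real.exp_add] at hmul
  simp at hmul
  nlinarith [hmul]

/-- Pointwise: (1 - e^{-x}) x ≤ 4 (e^{-x} - 1 + x) for x ≥ 0. -/
lemma psit_lemB {x : ℝ} (hx : 0 ≤ x) :
    (1 - Real.exp (-x)) * x ≤ 4 * (Real.exp (-x) - 1 + x) := by
  rcases le_or_gt x (4/3) with h | h
  · have h2 : Real.exp (-(x/2)) * Real.exp (-(x/2)) = Real.exp (-x) := by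
      rw [← Real.exp_add]; ring_nf
    have h3 : 1 - x/2 ≤ Real.exp (-(x/2)) := by
      have := Real.add_one_le_exp (-(x/2)); linarith
    have h4 : (0:ℝ) ≤ 1 - x/2 := by linarith
    have h5 : (1 - x/2) * (1 - x/2) ≤ Real.exp (-x) := by
      nlinarith [Real.exp_pos (-(x/2))]
    have h6 : (4 + x) * ((1 - x/2) * (1 - x/2)) ≤ (4 + x) * Real.exp (-x) :=
      mul_le_mul_of_nonneg_left h5 (by linarith)
    nlinarith [h6, mul_nonneg (mul_nonneg hx hx) hx]
  · have h1 : Real.exp (-x) ≤ 1 := by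
      calc Real.exp (-x) ≤ Real.exp 0 := Real.exp_le_exp.mpr (by linarith)
        _ = 1 := Real.exp_zero
    nlinarith [Real.exp_pos (-x), mul_nonneg (Real.exp_pos (-x)).le hx]

/-- Pointwise bound: (1-e^{-x}) x ≤ min x x² for x ≥ 0. -/
lemma psit_lemC {x : ℝ} (hx : 0 ≤ x) : (1 - Real.exp (-x)) * x ≤ min x (x^2) := by
  have h1 : Real.exp (-x) ≤ 1 := by
    calc Real.exp (-x) ≤ Real.exp 0 := Real.exp_le_exp.mpr (by linarith)
      _ = 1 := Real.exp_zero
  have h2 : 1 - Real.exp (-x) ≤ x := by nlinarith [Real.add_one_le_exp (-x)]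
  refine le_min ?_ ?_
  · nlinarith [mul_nonneg (Real.exp_pos (-x)).le hx]
  · nlinarith

/-- With ψ'(λ) = α + 2βλ + ∫ (1-e^{-λr}) r ν(dr) and
ψ̃(λ) = ψ(λ)/λ for λ > 0 (ψ̃(0) = α), one has ψ̃(λ) ≤ ψ'(λ) ≤ 4 ψ̃(λ) for λ ≥ 0. -/
theorem psit_le_psi'_le (α β : ℝ) (hα : 0 ≤ α) (hβ : 0 ≤ β)
    (ν : Measure ℝ) (hν0 : ν (Set.Iic 0) = 0)
    (hνint : Integrable (fun r => min r (r ^ 2)) ν)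
    (ψ ψ' ψt : ℝ → ℝ)
    (hψ : ∀ l : ℝ, 0 ≤ l →
      ψ l = α * l + β * l ^ 2 + ∫ r, (Real.exp (-(l * r)) - 1 + l * r) ∂ν)
    (hψ' : ∀ l : ℝ, 0 ≤ l →
      ψ' l = α + 2 * β * l + ∫ r, (1 - Real.exp (-(l * r))) * r ∂ν)
    (hψt0 : ψt 0 = α)
    (hψt : ∀ l : ℝ, 0 < l → ψt l = ψ l / l) :
    ∀ l : ℝ, 0 ≤ l → ψt l ≤ ψ' l ∧ ψ' l ≤ 4 * ψt l := by
  have hae : ∀ᵐ r ∂ν, 0 < r := by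
    rw [ae_iff]
    convert hν0 using 2
    ext r; simp [not_lt]
  intro l hl0
  rcases eq_or_lt_of_le hl0 with rfl | hl
  · have h0 : ψ' 0 = α := by rw [hψ' 0 le_rfl]; simp
    rw [h0, hψt0]
    constructor <;> linarith
  -- l > 0
  set g1 : ℝ → ℝ := fun r => Real.exp (-(l * r)) - 1 + l * r with hg1
  set g2 : ℝ → ℝ := fun r => (1 - Real.exp (-(l * r))) * r with hg2
  -- pointwise facts on (0,∞)
  have hfact : ∀ r : ℝ, 0 < r →
      0 ≤ g1 r ∧ g1 r ≤ l * g2 r ∧ l * g2 r ≤ 4 * g1 r ∧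
      l * g2 r ≤ max l (l^2) * min r (r^2) := by
    intro r hr
    have hx : 0 ≤ l * r := le_of_lt (mul_pos hl hr)
    have hA := psit_lemA hx
    have hB := psit_lemB hx
    have hCx := psit_lemC hx
    have hid : (1 - Real.exp (-(l*r))) * (l*r) = l * g2 r := by
      simp only [hg2]; ring
    rw [hid] at hA hB hCx
    have h0 : 0 ≤ g1 r := by
      have := Real.add_one_le_exp (-(l*r)); simp only [hg1]; linarith
    refine ⟨h0, hA, hB, le_trans hCx ?_⟩
    rcases le_total r (r^2) with hr2 | hr2
    · rw [min_eq_left hr2]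
      calc min (l*r) ((l*r)^2) ≤ l * r := min_le_left _ _
        _ ≤ max l (l^2) * r := by
            exact mul_le_mul_of_nonneg_right (le_max_left _ _) hr.le
    · rw [min_eq_right hr2]
      calc min (l*r) ((l*r)^2) ≤ (l*r)^2 := min_le_right _ _
        _ = l^2 * r^2 := by ring
        _ ≤ max l (l^2) * r^2 :=
            mul_le_mul_of_nonneg_right (le_max_right _ _) (sq_nonneg r)
  have hmeas1 : AEStronglyMeasurable g1 ν := by
    apply Continuous.aestronglyMeasurable
    simp only [hg1]; continuity
  have hmeas2 : AEStronglyMeasurable (fun r => l * g2 r) ν := by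
    apply Continuous.aestronglyMeasurable
    simp only [hg2]; continuity
  -- integrability
  have hint2l : Integrable (fun r => l * g2 r) ν := by
    apply Integrable.mono' (hνint.const_mul (max l (l^2))) hmeas2
    filter_upwards [hae] with r hr
    obtain ⟨h0, hA, hB, hC⟩ := hfact r hr
    rw [Real.norm_eq_abs, abs_of_nonneg (le_trans h0 hA)]
    exact hC
  have hint1 : Integrable g1 ν := by
    apply Integrable.mono' hint2l hmeas1
    filter_upwards [hae] with r hr
    obtain ⟨h0, hA, hB, hC⟩ := hfact r hr
    rw [Real.norm_eq_abs, abs_of_nonneg h0]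
    exact hA
  have hint2 : Integrable g2 ν := by
    have := hint2l.const_mul l⁻¹
    simpa [← mul_assoc, inv_mul_cancel₀ (ne_of_gt hl)] using this
  -- key integral inequalities
  have key1 : (∫ r, g1 r ∂ν) ≤ l * ∫ r, g2 r ∂ν := by
    rw [← integral_const_mul _ _]
    apply integral_mono_ae hint1 hint2l
    filter_upwards [hae] with r hr
    exact (hfact r hr).2.1
  have key2 : l * (∫ r, g2 r ∂ν) ≤ 4 * ∫ r, g1 r ∂ν := by
    rw [← integral_const_mul _ _, ← integral_const_mul _ _]
    apply integral_mono_ae hint2l (hint1.const_mul 4)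
    filter_upwards [hae] with r hr
    exact (hfact r hr).2.2.1
  have hψl := hψ l hl0
  have hψ'l := hψ' l hl0
  have hβl : 0 ≤ β * l^2 := mul_nonneg hβ (sq_nonneg l)
  constructor
  · rw [hψt l hl, div_le_iff₀ hl, hψl, hψ'l]
    nlinarith [key1]
  · rw [hψt l hl, ← mul_div_assoc, le_div_iff₀ hl, hψl, hψ'l]
    nlinarith [key2]
end

section
/- Let ψ be a branching mechanism of Lévy–Khintchine form satisfying ∫^∞ du/ψ(u) < ∞, let ψ⁻¹ denote the inverse of ψ and φ = ψ' ∘ ψ⁻¹. Then for all λ > 0: λ/ψ⁻¹(λ) ≤ φ(λ) ≤ 4λ/ψ⁻¹(λ). -/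
/-!
Each `λ ↦ e^{-λr} - 1 + λr` is convex, so `ψ` is convex on `[0, ∞)` with `ψ 0 = 0`. At `μ > 0`
convexity squeezes `ψ'(μ)` between the chord slopes `ψ(μ)/μ` and `(ψ(2μ) - ψ(μ))/μ`, and
`e^{-2x} - 1 + 2x ≤ 4 (e^{-x} - 1 + x)` gives `ψ(2μ) ≤ 4 ψ(μ)`. Take `μ = ψ⁻¹(λ)`.
-/

open MeasureTheory Real Set

theorem exp_neg_sub_one_add_nonneg (x : ℝ) : 0 ≤ exp (-x) - 1 + x := by
  linarith [add_one_le_exp (-x)]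

theorem exp_neg_sub_one_add_le_self {x : ℝ} (hx : 0 ≤ x) : exp (-x) - 1 + x ≤ x := by
  linarith [exp_le_one_iff.mpr (neg_nonpos.mpr hx)]

theorem exp_neg_sub_one_add_le_sq {x : ℝ} (hx : 0 ≤ x) : exp (-x) - 1 + x ≤ x ^ 2 := by
  rcases le_total x 1 with hx1 | hx1
  · have h := abs_exp_sub_one_sub_id_le (x := -x) (by rwa [abs_neg, abs_of_nonneg hx])
    rw [neg_sq] at h
    linarith [le_abs_self (exp (-x) - 1 - -x)]
  · nlinarith [exp_neg_sub_one_add_le_self hx]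

theorem exp_neg_two_mul_sub_one_add_le {x : ℝ} (hx : 0 ≤ x) :
    exp (-(2 * x)) - 1 + 2 * x ≤ 4 * (exp (-x) - 1 + x) := by
  have hderiv : ∀ t : ℝ, HasDerivAt
      (fun t => 4 * (exp (-t) - 1 + t) - (exp (-(2 * t)) - 1 + 2 * t))
      (2 * (1 - exp (-t)) ^ 2) t := by
    intro t
    have hF : ∀ c : ℝ, HasDerivAt (fun t => exp (-(c * t)) - 1 + c * t)
        (c * (1 - exp (-(c * t)))) t := fun c =>
      ((((hasDerivAt_id t).const_mul c).neg.exp.sub_const 1).add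
        ((hasDerivAt_id t).const_mul c)).congr_deriv (by simp only [Pi.neg_apply, id]; ring)
    have h := ((hF 1).const_mul 4).sub (hF 2)
    simp only [one_mul] at h
    refine h.congr_deriv ?_
    rw [show -(2 * t) = -t + -t by ring, exp_add]
    ring
  have hmono := monotone_of_hasDerivAt_nonneg hderiv fun t => by positivity
  have := hmono hx
  simp only [neg_zero, mul_zero, exp_zero] at this
  linarith

theorem convexOn_integral {X E : Type*} [MeasurableSpace X] {μ : Measure X}
    [AddCommGroup E] [Module ℝ E] {s : Set E} {f : E → X → ℝ} (hs : Convex ℝ s)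
    (hf : ∀ x, ConvexOn ℝ s (f · x)) (hint : ∀ l ∈ s, Integrable (f l) μ) :
    ConvexOn ℝ s fun l => ∫ x, f l x ∂μ := by
  refine ⟨hs, fun l hl m hm a b ha hb hab => ?_⟩
  simp only [smul_eq_mul]
  rw [← integral_const_mul, ← integral_const_mul,
    ← integral_add ((hint l hl).const_mul a) ((hint m hm).const_mul b)]
  exact integral_mono (hint _ (hs hl hm ha hb hab))
    (((hint l hl).const_mul a).add ((hint m hm).const_mul b))
    fun x => (hf x).2 hl hm ha hb hab

noncomputable def branchingMechanism (α β : ℝ) (ν : Measure ℝ) (l : ℝ) : ℝ :=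
  α * l + β * l ^ 2 + ∫ r, (exp (-(l * r)) - 1 + l * r) ∂ν

section LevyKhintchine

variable {ν : Measure ℝ}

theorem ae_pos_of_measure_Iic_zero (hν0 : ν (Iic 0) = 0) : ∀ᵐ r ∂ν, 0 < r :=
  (measure_eq_zero_iff_ae_notMem.1 hν0).mono fun _ hr => not_le.1 hr

theorem integrable_exp_neg_mul_sub_one_add_mul (hν0 : ν (Iic 0) = 0)
    (hνint : Integrable (fun r => min r (r ^ 2)) ν) {c : ℝ} (hc : 0 ≤ c) :
    Integrable (fun r => exp (-(c * r)) - 1 + c * r) ν := by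
  refine (hνint.const_mul (max c (c ^ 2))).mono' (by fun_prop) ?_
  filter_upwards [ae_pos_of_measure_Iic_zero hν0] with r hr
  have hcr : 0 ≤ c * r := mul_nonneg hc hr.le
  rw [norm_of_nonneg (exp_neg_sub_one_add_nonneg _)]
  rcases le_total r (r ^ 2) with h | h
  · rw [min_eq_left h]
    calc exp (-(c * r)) - 1 + c * r ≤ c * r := exp_neg_sub_one_add_le_self hcr
      _ ≤ max c (c ^ 2) * r := by gcongr; exact le_max_left _ _
  · rw [min_eq_right h]
    calc exp (-(c * r)) - 1 + c * r ≤ (c * r) ^ 2 := exp_neg_sub_one_add_le_sq hcr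
      _ = c ^ 2 * r ^ 2 := by ring
      _ ≤ max c (c ^ 2) * r ^ 2 := by gcongr; exact le_max_right _ _

theorem convexOn_exp_neg_mul_sub_one_add_mul (r : ℝ) :
    ConvexOn ℝ univ fun l : ℝ => exp (-(l * r)) - 1 + l * r := by
  have h := ((convexOn_exp.comp_linearMap (-LinearMap.mulRight ℝ r)).add_const (-1)).add
    ((LinearMap.mulRight ℝ r).convexOn convex_univ)
  refine h.congr fun l _ => ?_
  simp only [Function.comp_apply, Pi.add_apply, LinearMap.neg_apply, LinearMap.mulRight_apply]
  ring

theorem convexOn_branchingMechanism (α : ℝ) {β : ℝ} (hβ : 0 ≤ β) (hν0 : ν (Iic 0) = 0)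
    (hνint : Integrable (fun r => min r (r ^ 2)) ν) :
    ConvexOn ℝ (Ici 0) (branchingMechanism α β ν) :=
  (((LinearMap.mulLeft ℝ α).convexOn (convex_Ici 0)).add ((convexOn_pow 2).smul hβ)).add
    (convexOn_integral (convex_Ici 0)
      (fun r => (convexOn_exp_neg_mul_sub_one_add_mul r).subset (subset_univ _) (convex_Ici 0))
      fun _ hl => integrable_exp_neg_mul_sub_one_add_mul hν0 hνint hl)

theorem branchingMechanism_two_mul_le {α : ℝ} (β : ℝ) (hα : 0 ≤ α)
    (hν0 : ν (Iic 0) = 0) (hνint : Integrable (fun r => min r (r ^ 2)) ν) {l : ℝ} (hl : 0 ≤ l) :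
    branchingMechanism α β ν (2 * l) ≤ 4 * branchingMechanism α β ν l := by
  have hintegral : ∫ r, (exp (-(2 * l * r)) - 1 + 2 * l * r) ∂ν
      ≤ 4 * ∫ r, (exp (-(l * r)) - 1 + l * r) ∂ν := by
    rw [← integral_const_mul]
    refine integral_mono_ae (integrable_exp_neg_mul_sub_one_add_mul hν0 hνint (by positivity))
      ((integrable_exp_neg_mul_sub_one_add_mul hν0 hνint hl).const_mul 4) ?_
    filter_upwards [ae_pos_of_measure_Iic_zero hν0] with r hr
    simpa only [mul_assoc] using exp_neg_two_mul_sub_one_add_le (mul_nonneg hl hr.le)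
  unfold branchingMechanism
  nlinarith [mul_nonneg hα hl]

end LevyKhintchine

theorem ConvexOn.div_le_of_hasDerivAt {f : ℝ → ℝ} {x f' : ℝ} (hf : ConvexOn ℝ (Ici 0) f)
    (h0 : f 0 = 0) (hx : 0 < x) (hd : HasDerivAt f f' x) : f x / x ≤ f' := by
  simpa [slope_def_field, h0] using hf.slope_le_of_hasDerivAt self_mem_Ici hx.le hx hd

theorem ConvexOn.le_of_hasDerivAt_of_two_mul_le {f : ℝ → ℝ} {x f' : ℝ}
    (hf : ConvexOn ℝ (Ici 0) f) (hx : 0 < x) (hd : HasDerivAt f f' x)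
    (h2 : f (2 * x) ≤ 4 * f x) : f' ≤ 3 * f x / x := by
  have h := hf.le_slope_of_hasDerivAt (y := 2 * x) hx.le (by simp only [mem_Ici]; positivity)
    (by linarith) hd
  rw [slope_def_field, show 2 * x - x = x by ring] at h
  exact h.trans (by gcongr; linarith)

theorem phi_comparison_general (α β : ℝ) (hα : 0 ≤ α) (hβ : 0 ≤ β)
    (ν : Measure ℝ) (hν0 : ν (Set.Iic 0) = 0)
    (hνint : Integrable (fun r => min r (r ^ 2)) ν)
    (ψ ψ' ψinv : ℝ → ℝ)
    (hψ : ∀ l : ℝ, 0 ≤ l →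
      ψ l = α * l + β * l ^ 2 + ∫ r, (Real.exp (-(l * r)) - 1 + l * r) ∂ν)
    (hderiv : ∀ l : ℝ, 0 < l → HasDerivAt ψ (ψ' l) l)
    (hinvpos : ∀ l : ℝ, 0 < l → 0 < ψinv l)
    (hinv₁ : ∀ l : ℝ, 0 ≤ l → ψ (ψinv l) = l) :
    ∀ l : ℝ, 0 < l →
      l / ψinv l ≤ ψ' (ψinv l) ∧ ψ' (ψinv l) ≤ 4 * l / ψinv l := by
  intro l hl
  set μ := ψinv l
  have hμ : 0 < μ := hinvpos l hl
  have hψμ : ψ μ = l := hinv₁ l hl.le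
  have hconv : ConvexOn ℝ (Ici 0) ψ :=
    (convexOn_branchingMechanism α hβ hν0 hνint).congr fun x hx => (hψ x hx).symm
  have hψ0 : ψ 0 = 0 := by simp [hψ 0 le_rfl]
  have hdouble : ψ (2 * μ) ≤ 4 * ψ μ := by
    rw [hψ _ (by positivity), hψ _ hμ.le]
    exact branchingMechanism_two_mul_le β hα hν0 hνint hμ.le
  constructor
  · simpa only [hψμ] using hconv.div_le_of_hasDerivAt hψ0 hμ (hderiv μ hμ)
  · calc ψ' μ ≤ 3 * ψ μ / μ := hconv.le_of_hasDerivAt_of_two_mul_le hμ (hderiv μ hμ) hdouble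
      _ ≤ 4 * l / μ := by rw [hψμ]; gcongr; norm_num

/-- For a branching mechanism ψ of Lévy–Khintchine form satisfying the
extinction condition, with ψ⁻¹ the inverse of ψ and φ = ψ' ∘ ψ⁻¹, one has
λ/ψ⁻¹(λ) ≤ φ(λ) ≤ 4λ/ψ⁻¹(λ) for all λ > 0. -/
theorem phi_comparison (α β : ℝ) (hα : 0 ≤ α) (hβ : 0 ≤ β)
    (ν : Measure ℝ) (hν0 : ν (Set.Iic 0) = 0)
    (hνint : Integrable (fun r => min r (r ^ 2)) ν)
    (ψ ψ' ψinv : ℝ → ℝ)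
    (hψ : ∀ l : ℝ, 0 ≤ l →
      ψ l = α * l + β * l ^ 2 + ∫ r, (Real.exp (-(l * r)) - 1 + l * r) ∂ν)
    (hext : IntegrableOn (fun u => 1 / ψ u) (Set.Ioi 1))
    (hderiv : ∀ l : ℝ, 0 < l → HasDerivAt ψ (ψ' l) l)
    (hinvpos : ∀ l : ℝ, 0 < l → 0 < ψinv l)
    (hinv₁ : ∀ l : ℝ, 0 ≤ l → ψ (ψinv l) = l)
    (hinv₂ : ∀ l : ℝ, 0 ≤ l → ψinv (ψ l) = l) :
    ∀ l : ℝ, 0 < l →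
      l / ψinv l ≤ ψ' (ψinv l) ∧ ψ' (ψinv l) ≤ 4 * l / ψinv l :=
  phi_comparison_general α β hα hβ ν hν0 hνint ψ ψ' ψinv hψ hderiv hinvpos hinv₁
end

section
/- Fix γ ∈ (1,2). For n ≥ 3 set θₙ = n log n, rₙ = e^{-θₙ}, aₙ = rₙ^{-γ}, and π = Σ_{n≥3} aₙ δ_{rₙ}. Then π((1,∞)) = 0 and ∫₍₀,∞₎ r² π(dr) = Σ_{n≥3} rₙ^{2-γ} < ∞, so ψ(λ) = ∫ (e^{-λr} - 1 + λr) π(dr) defines a branching mechanism. Moreover, the lower exponent of ψ' at infinity satisfies γ_{ψ'} ≥ γ - 1; i.e., for every c < γ - 1, ψ'(λ) λ^{-c} → ∞ as λ → ∞. -/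
open MeasureTheory Real Set Filter
open scoped ENNReal

/-!
Write θₙ = n log n, so that rₙ = e^{-θₙ}. For large λ pick n with θₙ ≤ log λ < θₙ₊₁. Since
λ rₙ ≥ 1, the n-th term of ψ'(λ) alone is at least (1 - e^{-1}) e^{(γ-1)θₙ}; and since
θₙ₊₁ - θₙ ≤ log n + 2 ≤ log log λ + 2, this is at least
(1 - e^{-1}) e^{(γ-1)(log λ - log log λ - 2)}, which beats λ^c for every c < γ - 1.
-/

theorem one_le_log_natCast {n : ℕ} (hn : 3 ≤ n) : 1 ≤ log n := by
  have h3 : (3 : ℝ) ≤ n := by exact_mod_cast hn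
  rw [le_log_iff_exp_le (by linarith)]
  linarith [exp_one_lt_d9]

theorem natCast_le_mul_log {n : ℕ} (hn : 3 ≤ n) : (n : ℝ) ≤ n * log n :=
  le_mul_of_one_le_right n.cast_nonneg (one_le_log_natCast hn)

theorem tendsto_natCast_mul_log_atTop : Tendsto (fun n : ℕ => (n : ℝ) * log n) atTop atTop :=
  tendsto_atTop_mono' atTop ((eventually_ge_atTop 3).mono fun _ => natCast_le_mul_log)
    tendsto_natCast_atTop_atTop

theorem succ_mul_log_succ_le {n : ℕ} (hn : 1 ≤ n) :
    ((n + 1 : ℕ) : ℝ) * log (n + 1 : ℕ) ≤ n * log n + log n + 2 := by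
  have hn' : (1 : ℝ) ≤ n := by exact_mod_cast hn
  have hlog : log (n + 1 : ℕ) - log n ≤ 1 / n := by
    rw [← log_div (by positivity) (by positivity)]
    calc log (((n + 1 : ℕ) : ℝ) / n) ≤ ((n + 1 : ℕ) : ℝ) / n - 1 :=
          log_le_sub_one_of_pos (by positivity)
      _ = 1 / n := by push_cast; field_simp; ring
  have h1 : (n : ℝ) * (log (n + 1 : ℕ) - log n) ≤ 1 := by
    calc (n : ℝ) * (log (n + 1 : ℕ) - log n) ≤ n * (1 / n) :=
          mul_le_mul_of_nonneg_left hlog (by positivity)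
      _ = 1 := by field_simp
  have h2 : 1 / (n : ℝ) ≤ 1 := by rw [div_le_one (by positivity)]; exact hn'
  push_cast at h1 hlog ⊢
  nlinarith

theorem exists_mem_Ico_succ_of_tendsto_atTop {θ : ℕ → ℝ} (hθ : Tendsto θ atTop atTop)
    {N : ℕ} {x : ℝ} (hx : θ N ≤ x) : ∃ n ≥ N, x ∈ Ico (θ n) (θ (n + 1)) := by
  by_contra! h
  have hle : ∀ n ≥ N, θ n ≤ x := fun n hn =>
    Nat.le_induction hx (fun k hk ih => not_lt.1 fun hlt => h k hk ⟨ih, hlt⟩) n hn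
  obtain ⟨n, hxn, hn⟩ := ((hθ.eventually_gt_atTop x).and (eventually_ge_atTop N)).exists
  exact (hle n hn).not_gt hxn

theorem tendsto_mul_sub_mul_log_atTop {a : ℝ} (ha : 0 < a) (b : ℝ) :
    Tendsto (fun x => a * x - b * log x) atTop atTop := by
  have hratio : Tendsto (fun x => a - b * (log x / x)) atTop (nhds a) := by
    simpa using (isLittleO_log_id_atTop.tendsto_div_nhds_zero.const_mul b).const_sub a
  refine (tendsto_id.atTop_mul_pos ha hratio).congr' ?_
  filter_upwards [eventually_ne_atTop 0] with x hx
  simp only [id]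
  field_simp

theorem sum_smul_dirac_Ioi_eq_zero (w : ℕ → ℝ≥0∞) {x : ℕ → ℝ} {a : ℝ} (hx : ∀ n, x n ≤ a) :
    Measure.sum (fun n => w n • Measure.dirac (x n)) (Ioi a) = 0 := by
  simp [Measure.sum_apply _ measurableSet_Ioi, Measure.dirac_apply' _ measurableSet_Ioi,
    Set.indicator_of_notMem, hx]

namespace StableLike

noncomputable def atom (n : ℕ) : ℝ := exp (-(n * log n))

noncomputable def psiDeriv (γ l : ℝ) : ℝ :=
  ∑' n : ℕ, atom (n + 3) ^ (-(γ - 1)) * (1 - exp (-(l * atom (n + 3))))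

theorem atom_pos (n : ℕ) : 0 < atom n := exp_pos _

theorem atom_le_one (n : ℕ) : atom n ≤ 1 :=
  exp_le_one_iff.2 (neg_nonpos.2 (mul_nonneg n.cast_nonneg (log_natCast_nonneg n)))

theorem atom_rpow (n : ℕ) (b : ℝ) : atom n ^ b = exp (-(n * log n) * b) := (exp_mul _ _).symm

theorem summable_atom_rpow {b : ℝ} (hb : 0 < b) : Summable fun n => atom (n + 3) ^ b := by
  refine Summable.of_nonneg_of_le (fun n => (rpow_pos_of_pos (atom_pos _) b).le) (fun n => ?_)
    (summable_exp_nat_mul_iff.2 (neg_neg_of_pos hb))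
  have hn : (n : ℝ) ≤ ((n + 3 : ℕ) : ℝ) * log (n + 3 : ℕ) :=
    le_trans (by push_cast; linarith) (natCast_le_mul_log (by omega))
  rw [atom_rpow, exp_le_exp]
  nlinarith

variable {γ : ℝ}

theorem psiDeriv_term_nonneg {l : ℝ} (hl : 0 ≤ l) (n : ℕ) :
    0 ≤ atom n ^ (-(γ - 1)) * (1 - exp (-(l * atom n))) :=
  mul_nonneg (rpow_nonneg (atom_pos n).le _)
    (sub_nonneg.2 (exp_le_one_iff.2 (neg_nonpos.2 (mul_nonneg hl (atom_pos n).le))))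

theorem summable_psiDeriv_term (hγ : γ < 2) {l : ℝ} (hl : 0 ≤ l) :
    Summable fun n => atom (n + 3) ^ (-(γ - 1)) * (1 - exp (-(l * atom (n + 3)))) := by
  refine Summable.of_nonneg_of_le (fun n => psiDeriv_term_nonneg hl _) (fun n => ?_)
    ((summable_atom_rpow (b := 2 - γ) (by linarith)).mul_left l)
  have hsplit : atom (n + 3) ^ (2 - γ) = atom (n + 3) ^ (-(γ - 1)) * atom (n + 3) := by
    rw [← rpow_add_one (atom_pos _).ne']; ring_nf
  rw [hsplit, mul_left_comm]
  refine mul_le_mul_of_nonneg_left ?_ (rpow_nonneg (atom_pos _).le _)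
  linarith [add_one_le_exp (-(l * atom (n + 3)))]

theorem psiDeriv_term_le (hγ : γ < 2) {l : ℝ} (hl : 0 ≤ l) {n : ℕ} (hn : 3 ≤ n) :
    atom n ^ (-(γ - 1)) * (1 - exp (-(l * atom n))) ≤ psiDeriv γ l := by
  obtain ⟨k, rfl⟩ := Nat.exists_eq_add_of_le' hn
  exact (summable_psiDeriv_term hγ hl).le_tsum k fun j _ => psiDeriv_term_nonneg hl _

theorem exp_mul_natCast_mul_log_le_psiDeriv (hγ : γ < 2) {l : ℝ} {n : ℕ} (hn : 3 ≤ n)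
    (hl : 1 ≤ l * atom n) :
    (1 - exp (-1)) * exp ((γ - 1) * (n * log n)) ≤ psiDeriv γ l := by
  have hl0 : 0 ≤ l := nonneg_of_mul_nonneg_left (zero_le_one.trans hl) (atom_pos n)
  have hpow : atom n ^ (-(γ - 1)) = exp ((γ - 1) * (n * log n)) := by rw [atom_rpow]; ring_nf
  have hfactor : 1 - exp (-1) ≤ 1 - exp (-(l * atom n)) := by gcongr
  refine le_trans ?_ (psiDeriv_term_le hγ hl0 hn)
  rw [hpow, mul_comm]
  exact mul_le_mul_of_nonneg_left hfactor (exp_pos _).le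

theorem sub_log_sub_two_le_mul_log {n : ℕ} (hn : 3 ≤ n) {x : ℝ}
    (hx : x ∈ Ico ((n : ℝ) * log n) ((n + 1 : ℕ) * log (n + 1 : ℕ))) :
    x - log x - 2 ≤ n * log n := by
  have hnx : (n : ℝ) ≤ x := (natCast_le_mul_log hn).trans hx.1
  have hlog : log n ≤ log x := log_le_log (by positivity) hnx
  linarith [hx.2, succ_mul_log_succ_le (n := n) (by omega)]

theorem eventually_le_psiDeriv (hγ1 : 1 ≤ γ) (hγ2 : γ < 2) : ∀ᶠ l in atTop,
    (1 - exp (-1)) * exp ((γ - 1) * (log l - log (log l) - 2)) ≤ psiDeriv γ l := by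
  filter_upwards [eventually_ge_atTop (exp ((3 : ℕ) * log (3 : ℕ)))] with l hl
  have hl0 : 0 < l := (exp_pos _).trans_le hl
  obtain ⟨n, hn, hbracket⟩ := exists_mem_Ico_succ_of_tendsto_atTop tendsto_natCast_mul_log_atTop
    ((le_log_iff_exp_le hl0).2 hl)
  have hmass : 1 ≤ l * atom n := by
    rw [atom, ← exp_log hl0, ← exp_add, one_le_exp_iff]
    linarith [hbracket.1]
  refine le_trans ?_ (exp_mul_natCast_mul_log_le_psiDeriv hγ2 hn hmass)
  gcongr
  · exact sub_nonneg.2 (exp_le_one_iff.2 (by norm_num))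
  · exact sub_log_sub_two_le_mul_log hn hbracket

theorem tendsto_psiDeriv_mul_rpow_neg_atTop (hγ1 : 1 < γ) (hγ2 : γ < 2) {c : ℝ}
    (hc : c < γ - 1) : Tendsto (fun l => psiDeriv γ l * l ^ (-c)) atTop atTop := by
  have hexponent : Tendsto (fun l => (γ - 1 - c) * log l - (γ - 1) * log (log l) - 2 * (γ - 1))
      atTop atTop :=
    tendsto_atTop_add_const_right _ _
      ((tendsto_mul_sub_mul_log_atTop (sub_pos.2 hc) (γ - 1)).comp tendsto_log_atTop)
  have hconst : 0 < 1 - exp (-1) := sub_pos.2 (exp_lt_one_iff.2 (by norm_num))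
  refine tendsto_atTop_mono' atTop ?_ ((tendsto_exp_atTop.comp hexponent).const_mul_atTop hconst)
  filter_upwards [eventually_le_psiDeriv hγ1.le hγ2, eventually_gt_atTop 0] with l hψ hl
  have hrpow : l ^ (-c) = exp (-c * log l) := by rw [rpow_def_of_pos hl, mul_comm]
  calc (1 - exp (-1)) * exp ((γ - 1 - c) * log l - (γ - 1) * log (log l) - 2 * (γ - 1))
      = (1 - exp (-1)) * exp ((γ - 1) * (log l - log (log l) - 2)) * l ^ (-c) := by
        rw [hrpow, mul_assoc, ← exp_add]; ring_nf
    _ ≤ psiDeriv γ l * l ^ (-c) := by gcongr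

end StableLike

/-- For γ ∈ (1,2), with rₙ = e^{-n log n}, aₙ = rₙ^{-γ} and
π = Σ_{n≥3} aₙ δ_{rₙ}: π((1,∞)) = 0, Σ_{n≥3} rₙ^{2-γ} < ∞, and the lower exponent of
ψ'(λ) = Σ_{n≥3} rₙ^{-(γ-1)}(1 - e^{-λrₙ}) at infinity is at least γ - 1. -/
theorem stable_like_construction (γ : ℝ) (hγ1 : 1 < γ) (hγ2 : γ < 2) :
    let r : ℕ → ℝ := fun n => Real.exp (-((n : ℝ) * Real.log n))
    let ν : Measure ℝ :=
      Measure.sum (fun n : ℕ =>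
        (ENNReal.ofReal (r (n + 3) ^ (-γ))) • Measure.dirac (r (n + 3)))
    let ψ' : ℝ → ℝ := fun l =>
      ∑' n : ℕ, r (n + 3) ^ (-(γ - 1)) * (1 - Real.exp (-(l * r (n + 3))))
    ν (Set.Ioi 1) = 0 ∧
    Summable (fun n : ℕ => r (n + 3) ^ (2 - γ)) ∧
    ∀ c : ℝ, c < γ - 1 →
      Tendsto (fun l : ℝ => ψ' l * l ^ (-c)) atTop atTop :=
  ⟨sum_smul_dirac_Ioi_eq_zero _ fun n => StableLike.atom_le_one (n + 3),
    StableLike.summable_atom_rpow (by linarith),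
    fun _ hc => StableLike.tendsto_psiDeriv_mul_rpow_neg_atTop hγ1 hγ2 hc⟩
end

section
/- With the notation of the previous construction (γ ∈ (1,2), θₙ = n log n, rₙ = e^{-θₙ}, π = Σ aₙ δ_{rₙ} with aₙ = rₙ^{-γ}), setting Rₙ = Σ_{m≥n} r_m^{2-γ} and Sₙ = Σ_{3≤m≤n} r_m^{-(γ-1)}, one has Rₙ ~ rₙ^{2-γ} and Sₙ ~ rₙ^{-(γ-1)} as n → ∞; consequently the upper exponent of ψ' at infinity satisfies η_{ψ'} ≤ γ - 1, so in fact γ_{ψ'} = η_{ψ'} = γ - 1. -/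
/-!
Write `r n = e^{-n log n}`. Since `(n + 1) log (n + 1) ≥ n log n + log (n + 1)`, we have
`r (n + 1) ≤ r n / (n + 1)`: the ratios of consecutive terms of `r ^ (2 - γ)` tend to `0` and
those of `r ^ (-(γ - 1))` to `∞`. A tail sum is then asymptotic to its first term and a partial
sum to its last one, which gives `R n ~ r n ^ (2 - γ)` and `S n ~ r n ^ (-(γ - 1))`.

For `r (n + 1) < λ⁻¹ ≤ r n`, bounding `1 - e^{-x}` by `1` up to `n` and by `x` after `n` gives
`ψ' λ ≤ S n + λ R (n + 1) = O(λ ^ (γ - 1))`. Conversely the single term at `n` gives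
`ψ' λ ≥ (1 - e⁻¹) r n ^ (-(γ - 1))`, and as `(n + 1) log (n + 1) = n log n + O(log n)` this beats
`λ ^ c ≤ r (n + 1) ^ (-c)` for every `c < γ - 1`.
-/

open Real Filter Topology

section RatioAsymptotics

variable {f ε : ℕ → ℝ}

theorem summable_of_succ_le_mul (hf : ∀ n, 0 ≤ f n) (hε : Tendsto ε atTop (𝓝 0))
    (hfε : ∀ n, f (n + 1) ≤ ε n * f n) : Summable f := by
  refine summable_of_ratio_norm_eventually_le (r := 1 / 2) (by norm_num) ?_
  filter_upwards [hε.eventually (gt_mem_nhds (by norm_num : (0 : ℝ) < 1 / 2))] with n hn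
  rw [Real.norm_of_nonneg (hf _), Real.norm_of_nonneg (hf _)]
  exact (hfε n).trans (mul_le_mul_of_nonneg_right hn.le (hf n))

theorem tendsto_tsum_nat_add_div_self (hf : ∀ n, 0 < f n) (hε_anti : Antitone ε)
    (hε : Tendsto ε atTop (𝓝 0)) (hfε : ∀ n, f (n + 1) ≤ ε n * f n) :
    Tendsto (fun n => (∑' m, f (n + m)) / f n) atTop (𝓝 1) := by
  have hsum : Summable f := summable_of_succ_le_mul (fun n => (hf n).le) hε hfε
  have htail (n : ℕ) : Summable fun m => f (n + m) := by
    simpa only [add_comm n] using (summable_nat_add_iff n).2 hsum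
  have hε0 (n : ℕ) : 0 ≤ ε n := hε_anti.le_of_tendsto hε n
  have hgeom (n m : ℕ) : f (n + m) ≤ ε n ^ m * f n :=
    le_geom (u := fun k => f (n + k)) (hε0 n) m fun k _ =>
      (hfε (n + k)).trans (mul_le_mul_of_nonneg_right (hε_anti (Nat.le_add_right n k)) (hf _).le)
  have hupper : ∀ᶠ n in atTop, (∑' m, f (n + m)) / f n ≤ (1 - ε n)⁻¹ := by
    filter_upwards [hε.eventually (gt_mem_nhds one_pos)] with n hn
    rw [div_le_iff₀ (hf n)]
    calc ∑' m, f (n + m) ≤ ∑' m, ε n ^ m * f n :=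
          (htail n).tsum_le_tsum (hgeom n) ((summable_geometric_of_lt_one (hε0 n) hn).mul_right _)
      _ = (1 - ε n)⁻¹ * f n := by rw [tsum_mul_right, tsum_geometric_of_lt_one (hε0 n) hn]
  have hlower (n : ℕ) : 1 ≤ (∑' m, f (n + m)) / f n := by
    rw [one_le_div (hf n)]
    simpa using (htail n).le_tsum 0 fun m _ => (hf _).le
  have hlim : Tendsto (fun n => (1 - ε n)⁻¹) atTop (𝓝 1) := by
    simpa using ((tendsto_const_nhds (x := (1 : ℝ))).sub hε).inv₀ (by norm_num)
  exact tendsto_of_tendsto_of_tendsto_of_le_of_le' tendsto_const_nhds hlim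
    (Eventually.of_forall hlower) hupper

end RatioAsymptotics

theorem tendsto_nhds_one_of_le_one_add_mul {ρ δ : ℕ → ℝ} (hδ0 : ∀ n, 0 ≤ δ n)
    (hδ : Tendsto δ atTop (𝓝 0)) (h1 : ∀ᶠ n in atTop, 1 ≤ ρ n)
    (hρ : ∀ n, ρ (n + 1) ≤ 1 + δ n * ρ n) : Tendsto ρ atTop (𝓝 1) := by
  obtain ⟨N, hN⟩ := eventually_atTop.1
    (hδ.eventually (gt_mem_nhds (by norm_num : (0 : ℝ) < 1 / 2)))
  set C := max (ρ N) 2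
  -- once `δ n < 1/2`, `ρ n ≤ C` gives `ρ (n + 1) ≤ 1 + C / 2 ≤ C` as `C ≥ 2`
  have hbound : ∀ n ≥ N, ρ n ≤ C := by
    refine Nat.le_induction (le_max_left _ _) fun n hn ih => ?_
    have : δ n * ρ n ≤ 1 / 2 * C :=
      (mul_le_mul_of_nonneg_left ih (hδ0 n)).trans
        (mul_le_mul_of_nonneg_right (hN n hn).le (by positivity))
    linarith [hρ n, le_max_right (ρ N) 2]
  rw [← tendsto_add_atTop_iff_nat 1]
  refine tendsto_of_tendsto_of_tendsto_of_le_of_le' tendsto_const_nhds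
    (by simpa using (hδ.mul_const C).const_add 1) ((tendsto_add_atTop_nat 1).eventually h1) ?_
  filter_upwards [eventually_ge_atTop N] with n hn
  exact (hρ n).trans (by gcongr; exacts [hδ0 n, hbound n hn])

theorem tendsto_sum_Icc_div_self {g δ : ℕ → ℝ} (a : ℕ) (hg : ∀ n, 0 < g n)
    (hδ : Tendsto δ atTop (𝓝 0)) (hgδ : ∀ n, g n ≤ δ n * g (n + 1)) :
    Tendsto (fun n => (∑ m ∈ Finset.Icc a n, g m) / g n) atTop (𝓝 1) := by
  have hδ0 (n : ℕ) : 0 ≤ δ n :=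
    nonneg_of_mul_nonneg_left ((hg n).le.trans (hgδ n)) (hg (n + 1))
  have hsum0 (n : ℕ) : 0 ≤ ∑ m ∈ Finset.Icc a n, g m :=
    Finset.sum_nonneg fun m _ => (hg m).le
  refine tendsto_nhds_one_of_le_one_add_mul hδ0 hδ ?_ fun n => ?_
  · filter_upwards [eventually_ge_atTop a] with n hn
    rw [one_le_div (hg n)]
    exact Finset.single_le_sum (fun m _ => (hg m).le) (Finset.mem_Icc.2 ⟨hn, le_rfl⟩)
  by_cases han : a ≤ n + 1
  · rw [Finset.sum_Icc_succ_top han, add_div, div_self (hg _).ne', add_comm]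
    gcongr
    rw [div_le_iff₀ (hg _), mul_comm (δ n), mul_assoc]
    exact (div_mul_cancel₀ _ (hg n).ne').symm.le.trans
      (mul_le_mul_of_nonneg_left (hgδ n) (div_nonneg (hsum0 n) (hg n).le))
  · rw [Finset.Icc_eq_empty (by omega), Finset.sum_empty, zero_div]
    linarith [mul_nonneg (hδ0 n) (div_nonneg (hsum0 n) (hg n).le)]

theorem exists_succ_lt_le_of_antitone {α : Type*} [LinearOrder α] {u : ℕ → α} (hu : Antitone u)
    {x : α} {N : ℕ} (hN : x ≤ u N) (hlt : ∃ k, u k < x) :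
    ∃ n ≥ N, u (n + 1) < x ∧ x ≤ u n := by
  classical
  have hNfind : N < Nat.find hlt := by
    by_contra! h
    exact (Nat.find_spec hlt).not_ge (hN.trans (hu h))
  refine ⟨Nat.find hlt - 1, by omega, ?_, ?_⟩
  · rw [Nat.sub_add_cancel (by omega)]
    exact Nat.find_spec hlt
  · exact not_lt.1 (Nat.find_min hlt (by omega))

theorem tsum_nat_add_eq_sum_Ico_add_tsum {f : ℕ → ℝ} (hf : Summable f) {a b : ℕ} (hab : a ≤ b) :
    ∑' k, f (k + a) = ∑ m ∈ Finset.Ico a b, f m + ∑' k, f (k + b) := by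
  rw [← ((summable_nat_add_iff a).2 hf).sum_add_tsum_nat_add (b - a),
    Finset.sum_Ico_eq_sum_range]
  simp only [add_assoc, Nat.sub_add_cancel hab, add_comm a]

noncomputable def expNegNLogN (n : ℕ) : ℝ := exp (-(n * log n))

theorem expNegNLogN_pos (n : ℕ) : 0 < expNegNLogN n := exp_pos _

theorem expNegNLogN_succ_mul_le (n : ℕ) : expNegNLogN (n + 1) * (n + 1) ≤ expNegNLogN n := by
  have hlog : (n : ℝ) * log n ≤ n * log (n + 1) := by
    rcases n.eq_zero_or_pos with rfl | hn
    · simp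
    · gcongr
      linarith
  have hsucc : (n : ℝ) + 1 = exp (log (n + 1)) := (exp_log (by positivity)).symm
  rw [expNegNLogN, expNegNLogN, hsucc, ← exp_add, exp_le_exp]
  push_cast
  linarith

theorem expNegNLogN_antitone : Antitone expNegNLogN :=
  antitone_nat_of_succ_le fun n =>
    (le_mul_of_one_le_right (expNegNLogN_pos _).le (by simp)).trans (expNegNLogN_succ_mul_le n)

theorem tendsto_expNegNLogN : Tendsto expNegNLogN atTop (𝓝 0) :=
  tendsto_exp_neg_atTop_nhds_zero.comp <| tendsto_natCast_atTop_atTop.atTop_mul_atTop₀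
    (tendsto_log_atTop.comp tendsto_natCast_atTop_atTop)

theorem expNegNLogN_rpow_succ_le (n : ℕ) {y : ℝ} (hy : 0 ≤ y) :
    expNegNLogN (n + 1) ^ y ≤ ((n : ℝ) + 1) ^ (-y) * expNegNLogN n ^ y := by
  have h : expNegNLogN (n + 1) ≤ ((n : ℝ) + 1)⁻¹ * expNegNLogN n := by
    rw [inv_mul_eq_div, le_div_iff₀ (by positivity)]
    exact expNegNLogN_succ_mul_le n
  calc expNegNLogN (n + 1) ^ y ≤ (((n : ℝ) + 1)⁻¹ * expNegNLogN n) ^ y :=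
        rpow_le_rpow (expNegNLogN_pos _).le h hy
    _ = ((n : ℝ) + 1) ^ (-y) * expNegNLogN n ^ y := by
        rw [mul_rpow (by positivity) (expNegNLogN_pos n).le, inv_rpow (by positivity),
          rpow_neg (by positivity)]

theorem expNegNLogN_rpow_neg_le_succ (n : ℕ) {b : ℝ} (hb : 0 ≤ b) :
    expNegNLogN n ^ (-b) ≤ ((n : ℝ) + 1) ^ (-b) * expNegNLogN (n + 1) ^ (-b) :=
  calc expNegNLogN n ^ (-b) ≤ (expNegNLogN (n + 1) * (n + 1)) ^ (-b) :=
        rpow_le_rpow_of_nonpos (by have := expNegNLogN_pos (n + 1); positivity)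
          (expNegNLogN_succ_mul_le n) (by linarith)
    _ = ((n : ℝ) + 1) ^ (-b) * expNegNLogN (n + 1) ^ (-b) := by
        rw [mul_rpow (expNegNLogN_pos _).le (by positivity), mul_comm]

theorem tendsto_natCast_add_one_rpow_neg {y : ℝ} (hy : 0 < y) :
    Tendsto (fun n : ℕ => ((n : ℝ) + 1) ^ (-y)) atTop (𝓝 0) :=
  (tendsto_rpow_neg_atTop hy).comp (tendsto_atTop_add_const_right _ 1 tendsto_natCast_atTop_atTop)

theorem summable_expNegNLogN_rpow {a : ℝ} (ha : 0 < a) : Summable fun n => expNegNLogN n ^ a :=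
  summable_of_succ_le_mul (fun n => (rpow_pos_of_pos (expNegNLogN_pos n) a).le)
    (tendsto_natCast_add_one_rpow_neg ha) fun n => expNegNLogN_rpow_succ_le n ha.le

theorem tendsto_tsum_expNegNLogN_rpow_div {a : ℝ} (ha : 0 < a) :
    Tendsto (fun n => (∑' m, expNegNLogN (n + m) ^ a) / expNegNLogN n ^ a) atTop (𝓝 1) :=
  tendsto_tsum_nat_add_div_self (fun n => rpow_pos_of_pos (expNegNLogN_pos n) a)
    (fun m n hmn => rpow_le_rpow_of_nonpos (by positivity) (by gcongr) (by linarith))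
    (tendsto_natCast_add_one_rpow_neg ha) fun n => expNegNLogN_rpow_succ_le n ha.le

theorem tendsto_sum_Icc_expNegNLogN_rpow_neg_div (a : ℕ) {b : ℝ} (hb : 0 < b) :
    Tendsto (fun n => (∑ m ∈ Finset.Icc a n, expNegNLogN m ^ (-b)) / expNegNLogN n ^ (-b))
      atTop (𝓝 1) :=
  tendsto_sum_Icc_div_self a (fun n => rpow_pos_of_pos (expNegNLogN_pos n) _)
    (tendsto_natCast_add_one_rpow_neg hb) fun n => expNegNLogN_rpow_neg_le_succ n hb.le

theorem add_one_mul_log_add_one_le {x : ℝ} (hx : 1 ≤ x) :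
    (x + 1) * log (x + 1) ≤ x * log x + log x + 2 := by
  have hx0 : 0 < x := by linarith
  have hlog : log (x + 1) ≤ log x + x⁻¹ := by
    have := log_le_sub_one_of_pos (show 0 < (x + 1) / x by positivity)
    rw [log_div (by positivity) hx0.ne', add_div, div_self hx0.ne', one_div] at this
    linarith
  calc (x + 1) * log (x + 1) ≤ (x + 1) * (log x + x⁻¹) := by gcongr
    _ = x * log x + log x + 1 + x⁻¹ := by field_simp; ring
    _ ≤ x * log x + log x + 2 := by linarith [inv_le_one_of_one_le₀ hx]

theorem tendsto_expNegNLogN_rpow_neg_mul_rpow_succ {b c : ℝ} (hc : 0 ≤ c) (hcb : c < b) :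
    Tendsto (fun n => expNegNLogN n ^ (-b) * expNegNLogN (n + 1) ^ c) atTop atTop := by
  have hexp (n : ℕ) : expNegNLogN n ^ (-b) * expNegNLogN (n + 1) ^ c =
      exp (b * (n * log n) - c * ((n + 1 : ℕ) * log (n + 1 : ℕ))) := by
    rw [expNegNLogN, expNegNLogN, ← exp_mul, ← exp_mul, ← exp_add]
    ring_nf
  have hlower : Tendsto (fun n : ℕ => ((b - c) * n - c) * log n - 2 * c) atTop atTop :=
    tendsto_atTop_add_const_right _ _ <|
      (tendsto_atTop_add_const_right _ _ (tendsto_natCast_atTop_atTop.const_mul_atTop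
        (sub_pos.2 hcb))).atTop_mul_atTop₀ (tendsto_log_atTop.comp tendsto_natCast_atTop_atTop)
  simp only [hexp]
  refine tendsto_exp_atTop.comp (tendsto_atTop_mono' _ ?_ hlower)
  filter_upwards [eventually_ge_atTop 1] with n hn
  have := mul_le_mul_of_nonneg_left (add_one_mul_log_add_one_le (x := n) (by exact_mod_cast hn)) hc
  push_cast
  linarith

theorem exists_expNegNLogN_bracket {l : ℝ} (hl : 0 < l) {N : ℕ} (hN : (expNegNLogN N)⁻¹ ≤ l) :
    ∃ n ≥ N, expNegNLogN (n + 1) < l⁻¹ ∧ l⁻¹ ≤ expNegNLogN n :=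
  exists_succ_lt_le_of_antitone expNegNLogN_antitone (inv_le_of_inv_le₀ (expNegNLogN_pos N) hN)
    (tendsto_expNegNLogN.eventually (gt_mem_nhds (inv_pos.2 hl))).exists

-- `psiDeriv (γ - 1)` is the paper's `ψ'`
noncomputable def psiTerm (b l : ℝ) (n : ℕ) : ℝ :=
  expNegNLogN n ^ (-b) * (1 - exp (-(l * expNegNLogN n)))

noncomputable def psiDeriv (b l : ℝ) : ℝ := ∑' n, psiTerm b l (n + 3)

theorem psiTerm_nonneg (b : ℝ) {l : ℝ} (hl : 0 ≤ l) (n : ℕ) : 0 ≤ psiTerm b l n :=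
  mul_nonneg (rpow_nonneg (expNegNLogN_pos n).le _) <| sub_nonneg.2 <| exp_le_one_iff.2 <|
    neg_nonpos.2 (mul_nonneg hl (expNegNLogN_pos n).le)

theorem psiTerm_le (b l : ℝ) (n : ℕ) : psiTerm b l n ≤ expNegNLogN n ^ (-b) :=
  mul_le_of_le_one_right (rpow_nonneg (expNegNLogN_pos n).le _) (sub_le_self _ (exp_pos _).le)

theorem psiTerm_le_mul (b : ℝ) {l : ℝ} (n : ℕ) : psiTerm b l n ≤ l * expNegNLogN n ^ (1 - b) :=
  calc psiTerm b l n ≤ expNegNLogN n ^ (-b) * (l * expNegNLogN n) :=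
        mul_le_mul_of_nonneg_left (by linarith [add_one_le_exp (-(l * expNegNLogN n))])
          (rpow_nonneg (expNegNLogN_pos n).le _)
    _ = l * expNegNLogN n ^ (1 - b) := by
        rw [sub_eq_neg_add, rpow_add_one (expNegNLogN_pos n).ne']
        ring

theorem one_sub_exp_neg_one_mul_le_psiTerm (b : ℝ) {l : ℝ} {n : ℕ} (h : 1 ≤ l * expNegNLogN n) :
    (1 - exp (-1)) * expNegNLogN n ^ (-b) ≤ psiTerm b l n := by
  rw [psiTerm, mul_comm]
  gcongr
  exact rpow_nonneg (expNegNLogN_pos n).le _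

theorem summable_psiTerm {b : ℝ} (hb : b < 1) {l : ℝ} (hl : 0 ≤ l) : Summable (psiTerm b l) :=
  ((summable_expNegNLogN_rpow (sub_pos.2 hb)).mul_left l).of_nonneg_of_le (psiTerm_nonneg b hl)
    (psiTerm_le_mul b)

theorem psiDeriv_nonneg (b : ℝ) {l : ℝ} (hl : 0 ≤ l) : 0 ≤ psiDeriv b l :=
  tsum_nonneg fun _ => psiTerm_nonneg b hl _

theorem psiTerm_le_psiDeriv {b : ℝ} (hb : b < 1) {l : ℝ} (hl : 0 ≤ l) {n : ℕ} (hn : 3 ≤ n) :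
    psiTerm b l n ≤ psiDeriv b l := by
  have := ((summable_nat_add_iff 3).2 (summable_psiTerm hb hl)).le_tsum (n - 3)
    fun _ _ => psiTerm_nonneg b hl _
  rwa [Nat.sub_add_cancel hn] at this

theorem psiDeriv_le {b : ℝ} (hb : b < 1) {l : ℝ} (hl : 0 ≤ l) {n : ℕ} (hn : 2 ≤ n) :
    psiDeriv b l ≤ ∑ m ∈ Finset.Icc 3 n, expNegNLogN m ^ (-b) +
      l * ∑' m, expNegNLogN (n + 1 + m) ^ (1 - b) := by
  have htail : Summable fun m => l * expNegNLogN (n + 1 + m) ^ (1 - b) := by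
    simpa only [add_comm (n + 1)] using
      ((summable_nat_add_iff (n + 1)).2 (summable_expNegNLogN_rpow (sub_pos.2 hb))).mul_left l
  rw [psiDeriv, tsum_nat_add_eq_sum_Ico_add_tsum (summable_psiTerm hb hl) (by omega : 3 ≤ n + 1),
    Finset.Ico_add_one_right_eq_Icc, ← tsum_mul_left]
  gcongr with m _ k
  · exact psiTerm_le b l m
  · exact (summable_nat_add_iff (n + 1)).2 (summable_psiTerm hb hl)
  · rw [add_comm k]
    exact psiTerm_le_mul b _

theorem eventually_psiDeriv_le_rpow {b : ℝ} (hb0 : 0 < b) (hb1 : b < 1) :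
    ∀ᶠ l in atTop, psiDeriv b l ≤ 4 * l ^ b := by
  have hS := (tendsto_sum_Icc_expNegNLogN_rpow_neg_div 3 hb0).eventually (gt_mem_nhds one_lt_two)
  have hR := (tendsto_tsum_expNegNLogN_rpow_div (sub_pos.2 hb1)).eventually
    (gt_mem_nhds one_lt_two)
  obtain ⟨N, hN⟩ := eventually_atTop.1 (hS.and (hR.and (eventually_ge_atTop 2)))
  filter_upwards [eventually_gt_atTop 0, eventually_ge_atTop (expNegNLogN N)⁻¹] with l hl hlN
  obtain ⟨n, hnN, hlt, hle⟩ := exists_expNegNLogN_bracket hl hlN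
  have hSn := (div_lt_iff₀ (rpow_pos_of_pos (expNegNLogN_pos n) _)).1 (hN n hnN).1
  have hRn := (div_lt_iff₀ (rpow_pos_of_pos (expNegNLogN_pos (n + 1)) _)).1
    (hN (n + 1) (by omega)).2.1
  have hhead : expNegNLogN n ^ (-b) ≤ l ^ b :=
    calc expNegNLogN n ^ (-b) ≤ l⁻¹ ^ (-b) :=
          rpow_le_rpow_of_nonpos (inv_pos.2 hl) hle (by linarith)
      _ = l ^ b := by rw [inv_rpow hl.le, rpow_neg hl.le, inv_inv]
  have htail : l * expNegNLogN (n + 1) ^ (1 - b) ≤ l ^ b :=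
    calc l * expNegNLogN (n + 1) ^ (1 - b) ≤ l * l⁻¹ ^ (1 - b) := by
          gcongr
          exact (expNegNLogN_pos _).le
      _ = l ^ b := by
          rw [inv_rpow hl.le, ← rpow_neg hl.le, neg_sub, rpow_sub_one hl.ne',
            mul_div_cancel₀ _ hl.ne']
  calc psiDeriv b l ≤ _ := psiDeriv_le hb1 hl.le (hN n hnN).2.2
    _ ≤ 2 * expNegNLogN n ^ (-b) + l * (2 * expNegNLogN (n + 1) ^ (1 - b)) := by gcongr
    _ ≤ 4 * l ^ b := by linarith

theorem tendsto_psiDeriv_mul_rpow_neg_nhds_zero {b c : ℝ} (hb0 : 0 < b) (hb1 : b < 1)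
    (hbc : b < c) : Tendsto (fun l => psiDeriv b l * l ^ (-c)) atTop (𝓝 0) := by
  have hlim : Tendsto (fun l : ℝ => 4 * l ^ (-(c - b))) atTop (𝓝 0) := by
    simpa using (tendsto_rpow_neg_atTop (sub_pos.2 hbc)).const_mul 4
  refine tendsto_of_tendsto_of_tendsto_of_le_of_le' tendsto_const_nhds hlim ?_ ?_
  · filter_upwards [eventually_ge_atTop 0] with l hl
    exact mul_nonneg (psiDeriv_nonneg b hl) (rpow_nonneg hl _)
  · filter_upwards [eventually_psiDeriv_le_rpow hb0 hb1, eventually_gt_atTop 0] with l hψ hl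
    calc psiDeriv b l * l ^ (-c) ≤ 4 * l ^ b * l ^ (-c) := by gcongr
      _ = 4 * l ^ (-(c - b)) := by rw [mul_assoc, ← rpow_add hl]; ring_nf

theorem tendsto_psiDeriv_mul_rpow_neg_atTop {b c : ℝ} (hb1 : b < 1) (hc : 0 ≤ c) (hcb : c < b) :
    Tendsto (fun l => psiDeriv b l * l ^ (-c)) atTop atTop := by
  have hlim := (tendsto_expNegNLogN_rpow_neg_mul_rpow_succ hc hcb).const_mul_atTop
    (sub_pos.2 (exp_lt_one_iff.2 (by norm_num : (-1 : ℝ) < 0)))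
  rw [tendsto_atTop] at hlim ⊢
  intro M
  obtain ⟨N, hN⟩ := eventually_atTop.1 ((hlim M).and (eventually_ge_atTop 3))
  filter_upwards [eventually_gt_atTop 0, eventually_ge_atTop (expNegNLogN N)⁻¹] with l hl hlN
  obtain ⟨n, hnN, hlt, hle⟩ := exists_expNegNLogN_bracket hl hlN
  have hterm : (1 - exp (-1)) * expNegNLogN n ^ (-b) ≤ psiDeriv b l :=
    (one_sub_exp_neg_one_mul_le_psiTerm b ((inv_le_iff_one_le_mul₀' hl).1 hle)).trans
      (psiTerm_le_psiDeriv hb1 hl.le (hN n hnN).2)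
  have hpow : expNegNLogN (n + 1) ^ c ≤ l ^ (-c) :=
    (rpow_le_rpow (expNegNLogN_pos _).le hlt.le hc).trans_eq
      (by rw [inv_rpow hl.le, rpow_neg hl.le])
  calc M ≤ (1 - exp (-1)) * (expNegNLogN n ^ (-b) * expNegNLogN (n + 1) ^ c) := (hN n hnN).1
    _ = (1 - exp (-1)) * expNegNLogN n ^ (-b) * expNegNLogN (n + 1) ^ c := by ring
    _ ≤ psiDeriv b l * l ^ (-c) :=
        mul_le_mul hterm hpow (rpow_nonneg (expNegNLogN_pos _).le _) (psiDeriv_nonneg b hl.le)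

/-- With rₙ = e^{-n log n}, Rₙ = Σ_{m≥n} r_m^{2-γ} ~ rₙ^{2-γ} and
Sₙ = Σ_{3≤m≤n} r_m^{-(γ-1)} ~ rₙ^{-(γ-1)}; consequently for
ψ'(λ) = Σ_{n≥3} rₙ^{-(γ-1)}(1 - e^{-λrₙ}) one has η_{ψ'} ≤ γ-1 and in fact
γ_{ψ'} = η_{ψ'} = γ - 1. -/
theorem asymptotics_R_S (γ : ℝ) (hγ1 : 1 < γ) (hγ2 : γ < 2) :
    let r : ℕ → ℝ := fun n => Real.exp (-((n : ℝ) * Real.log n))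
    let R : ℕ → ℝ := fun n => ∑' m : ℕ, r (n + m) ^ (2 - γ)
    let S : ℕ → ℝ := fun n => ∑ m ∈ Finset.Icc 3 n, r m ^ (-(γ - 1))
    let ψ' : ℝ → ℝ := fun l =>
      ∑' n : ℕ, r (n + 3) ^ (-(γ - 1)) * (1 - Real.exp (-(l * r (n + 3))))
    Tendsto (fun n : ℕ => R n / r n ^ (2 - γ)) atTop (nhds 1) ∧
    Tendsto (fun n : ℕ => S n / r n ^ (-(γ - 1))) atTop (nhds 1) ∧
    (∀ c : ℝ, γ - 1 < c →
      Tendsto (fun l : ℝ => ψ' l * l ^ (-c)) atTop (nhds 0)) ∧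
    (∀ c : ℝ, 0 ≤ c → c < γ - 1 →
      Tendsto (fun l : ℝ => ψ' l * l ^ (-c)) atTop atTop) := by
  intro r R S ψ'
  have hb0 : 0 < γ - 1 := by linarith
  have hb1 : γ - 1 < 1 := by linarith
  exact ⟨tendsto_tsum_expNegNLogN_rpow_div (by linarith),
    tendsto_sum_Icc_expNegNLogN_rpow_neg_div 3 hb0,
    fun c hc => tendsto_psiDeriv_mul_rpow_neg_nhds_zero hb0 hb1 hc,
    fun c hc0 hc1 => tendsto_psiDeriv_mul_rpow_neg_atTop hb1 hc0 hc1⟩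
end

section
/- For any γ ∈ (1,2], there exists a branching mechanism ψ of Lévy–Khintchine form such that the lower and upper exponents of ψ at infinity satisfy γ_ψ = η_ψ = γ, while the exponent δ_ψ = sup{c ≥ 0 : ∃ Q > 0, Q ψ(u)u^{-c} ≤ ψ(v)v^{-c} for 1 ≤ u ≤ v} equals 1. -/
/-!
The Lévy measure puts mass `e^{γn³ - n²}` at `e^{-n³}`. As `e^{-x} - 1 + x` is comparable to
`min x x²`, for `λ = e^L` with `n³ ≤ L ≤ (n+1)³` the atoms up to `n` act linearly and the later
ones quadratically; the damping `e^{-n²}` makes both partial sums geometric, so that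
`ψ(λ) ≍ e^{(γ-1)n³ - n²} λ + e^{(γ-2)(n+1)³ - (n+1)²} λ²`. Hence `ψ(λ) λ^{-c} = e^{(γ-c)n³ + O(n²)}`
and `γ_ψ = η_ψ = γ`.

Since `(n+1)² - n²` is unbounded, the linear term still dominates on `e^{n³} ≤ λ ≤ e^{n³+n}`,
where `ψ(λ)/λ` is therefore almost constant; for `c > 1` this window makes
`ψ(v)v^{-c} / ψ(u)u^{-c}` as small as `e^{(1-c)n}`, so `δ_ψ ≤ 1`. Conversely `ψ(λ)/λ` is
nondecreasing because `e^{-x} - 1 + x` is convex and vanishes at `0`.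
-/

open MeasureTheory Real Set Filter Topology

noncomputable def lkIntegrand (x : ℝ) : ℝ := exp (-x) - 1 + x

lemma lkIntegrand_zero : lkIntegrand 0 = 0 := by simp [lkIntegrand]

lemma lkIntegrand_nonneg (x : ℝ) : 0 ≤ lkIntegrand x := by
  have := add_one_le_exp (-x)
  unfold lkIntegrand; linarith

lemma lkIntegrand_le_self {x : ℝ} (hx : 0 ≤ x) : lkIntegrand x ≤ x := by
  have : exp (-x) ≤ 1 := exp_le_one_iff.mpr (neg_nonpos.mpr hx)
  unfold lkIntegrand; linarith

lemma lkIntegrand_le_sq {x : ℝ} (hx : 0 ≤ x) : lkIntegrand x ≤ x ^ 2 := by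
  rcases le_total x 1 with h1 | h1
  · have := abs_exp_sub_one_sub_id_le (x := -x) (by rw [abs_neg, abs_of_nonneg hx]; exact h1)
    rw [neg_sq] at this
    exact le_trans (le_abs_self _) (by simpa [lkIntegrand, sub_neg_eq_add] using this)
  · nlinarith [lkIntegrand_le_self hx]

lemma convexOn_lkIntegrand : ConvexOn ℝ univ lkIntegrand := by
  have hexp : ConvexOn ℝ univ fun x : ℝ => exp (-x) :=
    convexOn_exp.comp_linearMap (-LinearMap.id)
  exact (hexp.add_const (-1)).add (convexOn_id convex_univ)

lemma lkIntegrand_div_monotoneOn : MonotoneOn (fun x => lkIntegrand x / x) (Ioi 0) := by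
  intro x hx y hy hxy
  simpa [lkIntegrand_zero] using
    convexOn_lkIntegrand.secant_mono (mem_univ 0) (mem_univ x) (mem_univ y) hx.ne' hy.ne' hxy

lemma div_four_le_lkIntegrand {x : ℝ} (hx : 1 ≤ x) : x / 4 ≤ lkIntegrand x := by
  have hslope := lkIntegrand_div_monotoneOn (mem_Ioi.mpr one_pos) (mem_Ioi.mpr (by linarith)) hx
  have hf1 : 1 / 4 ≤ lkIntegrand 1 := by
    have := exp_one_lt_d9
    rw [lkIntegrand, exp_neg, sub_add_cancel]
    rw [le_inv_comm₀ (by norm_num) (exp_pos 1)]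
    norm_num at this ⊢; linarith
  simp only [div_one] at hslope
  rw [le_div_iff₀ (by linarith)] at hslope
  nlinarith

lemma sq_div_four_le_lkIntegrand {x : ℝ} (h0 : 0 ≤ x) (h1 : x ≤ 1) :
    x ^ 2 / 4 ≤ lkIntegrand x := by
  have h := exp_bound (x := -x) (by rw [abs_neg, abs_of_nonneg h0]; exact h1) (n := 3) (by norm_num)
  simp only [Finset.sum_range_succ, Finset.sum_range_zero, abs_neg, abs_of_nonneg h0] at h
  norm_num [Nat.factorial] at h
  have := (abs_le.mp h).1
  unfold lkIntegrand
  nlinarith [mul_le_mul_of_nonneg_left h1 (sq_nonneg x)]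

noncomputable def atomicMeasure (a r : ℕ → ℝ) : Measure ℝ :=
  Measure.sum fun n => ENNReal.ofReal (a n) • Measure.dirac (r n)

noncomputable def atomicMechanism (a r : ℕ → ℝ) (l : ℝ) : ℝ :=
  ∑' n, a n * lkIntegrand (l * r n)

section AtomicMechanism

variable {a r : ℕ → ℝ}

lemma atomicMeasure_Iic_zero (hr : ∀ n, 0 < r n) : atomicMeasure a r (Iic 0) = 0 := by
  simp [atomicMeasure, Measure.sum_apply _ measurableSet_Iic, (hr _).not_ge]

lemma integrable_atomicMeasure_iff (ha : ∀ n, 0 ≤ a n) {g : ℝ → ℝ} :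
    Integrable g (atomicMeasure a r) ↔ Summable fun n => a n * ‖g (r n)‖ := by
  simp only [atomicMeasure, integrable_sum_dirac_iff (fun _ => ENNReal.ofReal_ne_top),
    ENNReal.toReal_ofReal (ha _)]

lemma integral_atomicMeasure (ha : ∀ n, 0 ≤ a n) {g : ℝ → ℝ}
    (hg : Summable fun n => a n * ‖g (r n)‖) :
    ∫ x, g x ∂atomicMeasure a r = ∑' n, a n * g (r n) := by
  rw [atomicMeasure, integral_sum_dirac_eq_tsum (fun _ => ENNReal.ofReal_ne_top)]
  · simp [ENNReal.toReal_ofReal (ha _)]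
  · simpa only [ENNReal.toReal_ofReal (ha _)] using hg

lemma integrable_min_sq_atomicMeasure (ha : ∀ n, 0 ≤ a n) (hr : ∀ n, 0 ≤ r n)
    (hs : Summable fun n => a n * r n ^ 2) :
    Integrable (fun x => min x (x ^ 2)) (atomicMeasure a r) := by
  refine (integrable_atomicMeasure_iff ha).mpr (hs.of_nonneg_of_le
    (fun n => mul_nonneg (ha n) (norm_nonneg _))
    fun n => mul_le_mul_of_nonneg_left ?_ (ha n))
  rw [norm_of_nonneg (le_min (hr n) (by positivity))]
  exact min_le_right _ _

lemma summable_mul_lkIntegrand (ha : ∀ n, 0 ≤ a n) (hr : ∀ n, 0 ≤ r n)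
    (hs : Summable fun n => a n * r n ^ 2) {l : ℝ} (hl : 0 ≤ l) :
    Summable fun n => a n * lkIntegrand (l * r n) := by
  refine (hs.mul_left (l ^ 2)).of_nonneg_of_le
    (fun n => mul_nonneg (ha n) (lkIntegrand_nonneg _)) fun n => ?_
  calc a n * lkIntegrand (l * r n) ≤ a n * (l * r n) ^ 2 :=
        mul_le_mul_of_nonneg_left (lkIntegrand_le_sq (mul_nonneg hl (hr n))) (ha n)
    _ = l ^ 2 * (a n * r n ^ 2) := by ring

lemma atomicMechanism_eq_integral (ha : ∀ n, 0 ≤ a n) (hr : ∀ n, 0 ≤ r n)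
    (hs : Summable fun n => a n * r n ^ 2) {l : ℝ} (hl : 0 ≤ l) :
    atomicMechanism a r l = ∫ x, (exp (-(l * x)) - 1 + l * x) ∂atomicMeasure a r := by
  refine (integral_atomicMeasure (g := fun x => lkIntegrand (l * x)) ha ?_).symm
  simpa only [norm_of_nonneg (lkIntegrand_nonneg _)] using
    summable_mul_lkIntegrand ha hr hs hl

lemma atomicMechanism_nonneg (ha : ∀ n, 0 ≤ a n) (l : ℝ) : 0 ≤ atomicMechanism a r l :=
  tsum_nonneg fun n => mul_nonneg (ha n) (lkIntegrand_nonneg _)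

lemma mul_lkIntegrand_le_atomicMechanism (ha : ∀ n, 0 ≤ a n) (hr : ∀ n, 0 ≤ r n)
    (hs : Summable fun n => a n * r n ^ 2) {l : ℝ} (hl : 0 ≤ l) (k : ℕ) :
    a k * lkIntegrand (l * r k) ≤ atomicMechanism a r l :=
  (summable_mul_lkIntegrand ha hr hs hl).le_tsum k
    fun n _ => mul_nonneg (ha n) (lkIntegrand_nonneg _)

lemma atomicMechanism_le_head_add_tail (ha : ∀ n, 0 ≤ a n) (hr : ∀ n, 0 ≤ r n)
    (hs : Summable fun n => a n * r n ^ 2) {l : ℝ} (hl : 0 ≤ l) (m : ℕ) :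
    atomicMechanism a r l ≤
      l * ∑ k ∈ Finset.range m, a k * r k + l ^ 2 * ∑' j, a (j + m) * r (j + m) ^ 2 := by
  have hsum := summable_mul_lkIntegrand ha hr hs hl
  have head : ∀ k, a k * lkIntegrand (l * r k) ≤ l * (a k * r k) := fun k => by
    have := mul_le_mul_of_nonneg_left (lkIntegrand_le_self (mul_nonneg hl (hr k))) (ha k)
    linarith
  have tail : ∀ k, a k * lkIntegrand (l * r k) ≤ l ^ 2 * (a k * r k ^ 2) := fun k => by
    have := mul_le_mul_of_nonneg_left (lkIntegrand_le_sq (mul_nonneg hl (hr k))) (ha k)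
    linarith
  rw [atomicMechanism, ← hsum.sum_add_tsum_nat_add m, Finset.mul_sum, ← tsum_mul_left]
  exact add_le_add (Finset.sum_le_sum fun k _ => head k)
    (Summable.tsum_le_tsum (fun j => tail (j + m)) ((summable_nat_add_iff m).mpr hsum)
      (((summable_nat_add_iff m).mpr hs).mul_left _))

lemma atomicMechanism_div_monotoneOn (ha : ∀ n, 0 ≤ a n) (hr : ∀ n, 0 < r n)
    (hs : Summable fun n => a n * r n ^ 2) :
    MonotoneOn (fun l => atomicMechanism a r l / l) (Ioi 0) := by
  intro u hu v hv huv
  have hr' : ∀ n, 0 ≤ r n := fun n => (hr n).le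
  simp only [atomicMechanism, ← tsum_div_const]
  refine (summable_mul_lkIntegrand ha hr' hs (le_of_lt hu)).div_const u |>.tsum_le_tsum
    (fun n => ?_) ((summable_mul_lkIntegrand ha hr' hs (le_of_lt hv)).div_const v)
  have hslope := lkIntegrand_div_monotoneOn (mul_pos hu (hr n)) (mul_pos hv (hr n))
    (mul_le_mul_of_nonneg_right huv (hr' n))
  simp only [mul_div_assoc]
  refine mul_le_mul_of_nonneg_left ?_ (ha n)
  rw [div_le_div_iff₀ hu hv]
  rw [div_le_div_iff₀ (mul_pos hu (hr n)) (mul_pos hv (hr n))] at hslope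
  nlinarith [hr n]

end AtomicMechanism

section Exponents

variable {φ : ℝ → ℝ} {γ : ℝ}

lemma sSup_setOf_tendsto_atTop_eq (hγ : 0 < γ)
    (hlow : ∀ c, 0 ≤ c → c < γ → Tendsto (fun l => φ l * l ^ (-c)) atTop atTop)
    (hup : ∀ c, γ < c → Tendsto (fun l => φ l * l ^ (-c)) atTop (𝓝 0)) :
    sSup {c : ℝ | 0 ≤ c ∧ Tendsto (fun l => φ l * l ^ (-c)) atTop atTop} = γ := by
  refine csSup_eq_of_forall_le_of_forall_lt_exists_gt ⟨0, le_rfl, hlow 0 le_rfl hγ⟩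
    (fun c hc => not_lt.mp fun hγc => not_tendsto_atTop_of_tendsto_nhds (hup c hγc) hc.2)
    fun w hw => ⟨max 0 ((w + γ) / 2),
      ⟨le_max_left _ _, hlow _ (le_max_left _ _) (max_lt hγ (by linarith))⟩,
      lt_max_of_lt_right (by linarith)⟩

lemma sInf_setOf_tendsto_zero_eq (hγ : 0 ≤ γ)
    (hlow : ∀ c, 0 ≤ c → c < γ → Tendsto (fun l => φ l * l ^ (-c)) atTop atTop)
    (hup : ∀ c, γ < c → Tendsto (fun l => φ l * l ^ (-c)) atTop (𝓝 0)) :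
    sInf {c : ℝ | 0 ≤ c ∧ Tendsto (fun l => φ l * l ^ (-c)) atTop (𝓝 0)} = γ := by
  refine csInf_eq_of_forall_ge_of_forall_gt_exists_lt ⟨γ + 1, by linarith, hup _ (by linarith)⟩
    (fun c hc => not_lt.mp fun hcγ => not_tendsto_atTop_of_tendsto_nhds hc.2 (hlow c hc.1 hcγ))
    fun w hw => ⟨(γ + w) / 2, ⟨by linarith, hup _ (by linarith)⟩, by linarith⟩

lemma sSup_setOf_scaling_eq_one (hmono : MonotoneOn (fun l => φ l / l) (Ioi 0))
    (hbad : ∀ c : ℝ, 1 < c → ∀ Q : ℝ, 0 < Q →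
      ∃ u v : ℝ, 1 ≤ u ∧ u ≤ v ∧ φ v * v ^ (-c) < Q * (φ u * u ^ (-c))) :
    sSup {c : ℝ | 0 ≤ c ∧ ∃ Q : ℝ, 0 < Q ∧
      ∀ u v : ℝ, 1 ≤ u → u ≤ v → Q * (φ u * u ^ (-c)) ≤ φ v * v ^ (-c)} = 1 := by
  refine IsGreatest.csSup_eq ⟨⟨zero_le_one, 1, one_pos, fun u v hu huv => ?_⟩, ?_⟩
  · simpa only [one_mul, rpow_neg_one, div_eq_mul_inv] using
      hmono (mem_Ioi.mpr (by linarith)) (mem_Ioi.mpr (by linarith)) huv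
  · rintro c ⟨-, Q, hQ, hscale⟩
    by_contra! hc
    obtain ⟨u, v, hu, huv, hlt⟩ := hbad c hc Q hQ
    exact (hscale u v hu huv).not_gt hlt

end Exponents

section CubeScale

lemma tendsto_floor_cbrt : Tendsto (fun L : ℝ => ⌊L ^ (3⁻¹ : ℝ)⌋₊) atTop atTop :=
  tendsto_nat_floor_atTop.comp (tendsto_rpow_atTop (by norm_num))

lemma mem_Icc_floor_cbrt_cube {L : ℝ} (hL : 0 ≤ L) :
    L ∈ Icc ((⌊L ^ (3⁻¹ : ℝ)⌋₊ : ℝ) ^ 3) (((⌊L ^ (3⁻¹ : ℝ)⌋₊ : ℝ) + 1) ^ 3) := by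
  have hy : 0 ≤ L ^ (3⁻¹ : ℝ) := rpow_nonneg hL _
  have hcube : (L ^ (3⁻¹ : ℝ)) ^ 3 = L := by
    simpa using rpow_inv_natCast_pow hL (n := 3) (by norm_num)
  constructor
  · calc (⌊L ^ (3⁻¹ : ℝ)⌋₊ : ℝ) ^ 3 ≤ (L ^ (3⁻¹ : ℝ)) ^ 3 :=
          pow_le_pow_left₀ (Nat.cast_nonneg _) (Nat.floor_le hy) 3
      _ = L := hcube
  · calc L = (L ^ (3⁻¹ : ℝ)) ^ 3 := hcube.symm
      _ ≤ _ := pow_le_pow_left₀ hy (Nat.lt_floor_add_one _).le 3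

variable {F : ℝ → ℝ} {g : ℕ → ℝ}

lemma tendsto_atTop_of_le_on_cubes (hg : Tendsto g atTop atTop)
    (hF : ∀ᶠ n : ℕ in atTop, ∀ L ∈ Icc ((n : ℝ) ^ 3) (((n : ℝ) + 1) ^ 3), g n ≤ F L) :
    Tendsto F atTop atTop := by
  refine tendsto_atTop_mono' atTop ?_ (hg.comp tendsto_floor_cbrt)
  filter_upwards [tendsto_floor_cbrt.eventually hF, eventually_ge_atTop 0] with L hL hL0
  exact hL L (mem_Icc_floor_cbrt_cube hL0)

lemma tendsto_zero_of_le_on_cubes (hg : Tendsto g atTop (𝓝 0))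
    (hF : ∀ᶠ n : ℕ in atTop, ∀ L ∈ Icc ((n : ℝ) ^ 3) (((n : ℝ) + 1) ^ 3), 0 ≤ F L ∧ F L ≤ g n) :
    Tendsto F atTop (𝓝 0) := by
  have hev : ∀ᶠ L in atTop, 0 ≤ F L ∧ F L ≤ g ⌊L ^ (3⁻¹ : ℝ)⌋₊ := by
    filter_upwards [tendsto_floor_cbrt.eventually hF, eventually_ge_atTop 0] with L hL hL0
    exact hL L (mem_Icc_floor_cbrt_cube hL0)
  exact tendsto_of_tendsto_of_tendsto_of_le_of_le' tendsto_const_nhds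
    (hg.comp tendsto_floor_cbrt) (hev.mono fun _ h => h.1) (hev.mono fun _ h => h.2)

end CubeScale

lemma tendsto_mul_cube_sub_sq {ε : ℝ} (hε : 0 < ε) :
    Tendsto (fun n : ℕ => ε * (n : ℝ) ^ 3 - 4 * ((n : ℝ) + 1) ^ 2) atTop atTop := by
  refine tendsto_atTop_mono' atTop ?_ tendsto_natCast_atTop_atTop
  filter_upwards [tendsto_natCast_atTop_atTop.eventually_ge_atTop (12 / ε),
    eventually_ge_atTop 2] with n hn hn2
  have hn2' : (2 : ℝ) ≤ n := by exact_mod_cast hn2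
  have hεn : 12 ≤ ε * n := by rwa [div_le_iff₀ hε, mul_comm] at hn
  nlinarith [mul_le_mul_of_nonneg_right hεn (sq_nonneg (n : ℝ))]

lemma summable_exp_sub_nat (c : ℝ) : Summable fun j : ℕ => exp (c - j) :=
  (summable_exp_neg_nat.mul_left (exp c)).congr fun j => by rw [← exp_add, ← sub_eq_add_neg]

lemma tsum_exp_sub_nat_le (c : ℝ) : ∑' j : ℕ, exp (c - j) ≤ 2 * exp c := by
  have hq : exp (-1) < 1 := exp_lt_one_iff.mpr (by norm_num)
  have hq2 : exp (-1) ≤ 1 / 2 := by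
    rw [exp_neg, inv_le_comm₀ (exp_pos 1) (by norm_num)]
    linarith [add_one_le_exp (1 : ℝ)]
  have hgeom : ∑' j : ℕ, exp (c - j) = exp c * (1 - exp (-1))⁻¹ := by
    rw [← tsum_geometric_of_lt_one (exp_pos _).le hq, ← tsum_mul_left]
    congr 1 with j
    rw [← exp_nat_mul, ← exp_add]; ring_nf
  rw [hgeom, mul_comm 2]
  gcongr
  rw [inv_le_comm₀ (by linarith) (by norm_num)]
  linarith

lemma growth_exponent_le_max {γ c x L : ℝ} (hc : c < γ) (hγ : γ ≤ 2) (hx : 0 ≤ x)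
    (hL : L ∈ Icc (x ^ 3) ((x + 1) ^ 3)) :
    (γ - c) * x ^ 3 - 4 * (x + 1) ^ 2 ≤
      max ((γ - 1) * x ^ 3 - x ^ 2 + (1 - c) * L)
        ((γ - 2) * (x + 1) ^ 3 - (x + 1) ^ 2 + (2 - c) * L) := by
  rcases le_or_gt c 1 with hc1 | hc1
  · refine le_max_of_le_left ?_
    nlinarith [mul_le_mul_of_nonneg_left hL.1 (sub_nonneg.mpr hc1)]
  · -- the weights `2 - c` and `c - 1` eliminate `L`
    by_contra! h
    have hcomb : (2 - c) * ((γ - 1) * x ^ 3 - x ^ 2 + (1 - c) * L) +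
        (c - 1) * ((γ - 2) * (x + 1) ^ 3 - (x + 1) ^ 2 + (2 - c) * L) =
        (γ - c) * x ^ 3 - (c - 1) * (2 - γ) * (3 * x ^ 2 + 3 * x + 1) -
          (2 - c) * x ^ 2 - (c - 1) * (x + 1) ^ 2 := by ring
    have hw : (c - 1) * (2 - γ) ≤ 1 := by nlinarith
    nlinarith [max_lt_iff.mp h,
      mul_le_mul_of_nonneg_right hw (by positivity : 0 ≤ 3 * x ^ 2 + 3 * x + 1)]

lemma decay_exponents_le {γ c x L : ℝ} (hγc : γ ≤ c) (hc : 1 ≤ c) (hγ : γ ≤ 2)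
    (hL : L ∈ Icc (x ^ 3) ((x + 1) ^ 3)) :
    (γ - 1) * x ^ 3 - x ^ 2 + (1 - c) * L ≤ (γ - c) * x ^ 3 ∧
      (γ - 2) * (x + 1) ^ 3 - (x + 1) ^ 2 + (2 - c) * L ≤ (γ - c) * x ^ 3 := by
  obtain ⟨h1, h2⟩ := hL
  refine ⟨by nlinarith [mul_le_mul_of_nonneg_left h1 (sub_nonneg.mpr hc)], ?_⟩
  rcases le_total c 2 with hc2 | hc2
  · nlinarith [mul_le_mul_of_nonneg_left h2 (sub_nonneg.mpr hc2),
      mul_le_mul_of_nonneg_left (h1.trans h2) (sub_nonneg.mpr hγc)]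
  · nlinarith [mul_le_mul_of_nonneg_left h1 (sub_nonneg.mpr hc2),
      mul_le_mul_of_nonneg_left (h1.trans h2) (sub_nonneg.mpr hγ)]

noncomputable def cubicAtom (n : ℕ) : ℝ := exp (-(n : ℝ) ^ 3)

noncomputable def cubicWeight (γ : ℝ) (n : ℕ) : ℝ := exp (γ * (n : ℝ) ^ 3 - (n : ℝ) ^ 2)

lemma cubicAtom_pos (n : ℕ) : 0 < cubicAtom n := exp_pos _

lemma cubicWeight_nonneg (γ : ℝ) (n : ℕ) : 0 ≤ cubicWeight γ n := (exp_pos _).le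

lemma cubicWeight_mul_cubicAtom_pow (γ : ℝ) (n k : ℕ) :
    cubicWeight γ n * cubicAtom n ^ k = exp ((γ - k) * (n : ℝ) ^ 3 - (n : ℝ) ^ 2) := by
  rw [cubicWeight, cubicAtom, ← exp_nat_mul, ← exp_add]; ring_nf

lemma exp_mul_cubicAtom (L : ℝ) (n : ℕ) : exp L * cubicAtom n = exp (L - (n : ℝ) ^ 3) := by
  rw [cubicAtom, ← exp_add, sub_eq_add_neg]

noncomputable abbrev cubicMechanism (γ : ℝ) : ℝ → ℝ := atomicMechanism (cubicWeight γ) cubicAtom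

section CubicMechanism

variable {γ c : ℝ}

lemma cubicWeight_mul_cubicAtom_sq_le (hγ : γ ≤ 2) (j m : ℕ) :
    cubicWeight γ (j + m) * cubicAtom (j + m) ^ 2 ≤
      exp ((γ - 2) * (m : ℝ) ^ 3 - (m : ℝ) ^ 2 - j) := by
  rw [cubicWeight_mul_cubicAtom_pow, exp_le_exp]
  have hj : (j : ℝ) ≤ (j : ℝ) ^ 2 := by exact_mod_cast Nat.le_self_pow two_ne_zero j
  have hcube : (m : ℝ) ^ 3 ≤ ((j + m : ℕ) : ℝ) ^ 3 := by gcongr; omega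
  push_cast at hcube ⊢
  nlinarith [mul_le_mul_of_nonpos_left hcube (by linarith : γ - 2 ≤ 0),
    mul_nonneg (Nat.cast_nonneg (α := ℝ) j) (Nat.cast_nonneg (α := ℝ) m)]

lemma summable_cubicWeight_mul_cubicAtom_sq (hγ : γ ≤ 2) :
    Summable fun n => cubicWeight γ n * cubicAtom n ^ 2 :=
  (summable_exp_sub_nat 0).of_nonneg_of_le
    (fun n => mul_nonneg (cubicWeight_nonneg γ n) (sq_nonneg _))
    fun n => by simpa using cubicWeight_mul_cubicAtom_sq_le hγ n 0

lemma tsum_cubicWeight_mul_cubicAtom_sq_le (hγ : γ ≤ 2) (m : ℕ) :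
    ∑' j, cubicWeight γ (j + m) * cubicAtom (j + m) ^ 2 ≤
      2 * exp ((γ - 2) * (m : ℝ) ^ 3 - (m : ℝ) ^ 2) :=
  (Summable.tsum_le_tsum (cubicWeight_mul_cubicAtom_sq_le hγ · m)
    ((summable_nat_add_iff m).mpr (summable_cubicWeight_mul_cubicAtom_sq hγ))
    (summable_exp_sub_nat _)).trans (tsum_exp_sub_nat_le _)

lemma sum_cubicWeight_mul_cubicAtom_le {n : ℕ} (hn : 2 * (n : ℝ) + 1 ≤ (γ - 1) * (n : ℝ) ^ 2) :
    ∑ k ∈ Finset.range (n + 1), cubicWeight γ k * cubicAtom k ≤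
      2 * exp ((γ - 1) * (n : ℝ) ^ 3 - (n : ℝ) ^ 2) := by
  set α := (γ - 1) * (n : ℝ) ^ 3 - (n : ℝ) ^ 2
  have hγ : 0 ≤ γ - 1 := by
    by_contra! h
    nlinarith [mul_nonneg (sq_nonneg (n : ℝ)) (neg_nonneg.mpr h.le)]
  have hterm : ∀ k ∈ Finset.range (n + 1),
      cubicWeight γ k * cubicAtom k ≤ exp (α - (n - k : ℕ)) := by
    intro k hk
    have hkn : k ≤ n := Nat.lt_succ_iff.mp (Finset.mem_range.mp hk)
    have hkn' : (k : ℝ) ≤ n := by exact_mod_cast hkn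
    rw [← pow_one (cubicAtom k), cubicWeight_mul_cubicAtom_pow, exp_le_exp, Nat.cast_sub hkn]
    have hgap : 0 ≤ ((n : ℝ) - k) * ((γ - 1) * ((n : ℝ) ^ 2 + n * k + (k : ℝ) ^ 2) - n - k - 1) :=
      mul_nonneg (by linarith) (by nlinarith [mul_nonneg hγ (mul_nonneg (Nat.cast_nonneg (α := ℝ) n)
        (Nat.cast_nonneg (α := ℝ) k)), mul_nonneg hγ (sq_nonneg (k : ℝ))])
    push_cast
    nlinarith
  calc ∑ k ∈ Finset.range (n + 1), cubicWeight γ k * cubicAtom k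
      ≤ ∑ k ∈ Finset.range (n + 1), exp (α - (n - k : ℕ)) := Finset.sum_le_sum hterm
    _ = ∑ j ∈ Finset.range (n + 1), exp (α - j) :=
        Finset.sum_range_reflect (fun j => exp (α - j)) (n + 1)
    _ ≤ ∑' j : ℕ, exp (α - j) :=
        (summable_exp_sub_nat α).sum_le_tsum _ fun _ _ => (exp_pos _).le
    _ ≤ 2 * exp α := tsum_exp_sub_nat_le α

lemma exp_div_four_le_cubicMechanism (hγ : γ ≤ 2) {n : ℕ} {L : ℝ} (hL : (n : ℝ) ^ 3 ≤ L) :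
    exp ((γ - 1) * (n : ℝ) ^ 3 - (n : ℝ) ^ 2 + L) / 4 ≤ cubicMechanism γ (exp L) := by
  have hx : 1 ≤ exp L * cubicAtom n := by
    rw [exp_mul_cubicAtom, one_le_exp_iff]; linarith
  calc exp ((γ - 1) * (n : ℝ) ^ 3 - (n : ℝ) ^ 2 + L) / 4
      = cubicWeight γ n * ((exp L * cubicAtom n) / 4) := by
        have h := cubicWeight_mul_cubicAtom_pow γ n 1
        rw [Nat.cast_one, pow_one] at h
        rw [exp_add, ← h]; ring
    _ ≤ cubicWeight γ n * lkIntegrand (exp L * cubicAtom n) :=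
        mul_le_mul_of_nonneg_left (div_four_le_lkIntegrand hx) (cubicWeight_nonneg γ n)
    _ ≤ _ := mul_lkIntegrand_le_atomicMechanism (cubicWeight_nonneg γ) (cubicAtom_pos · |>.le)
        (summable_cubicWeight_mul_cubicAtom_sq hγ) (exp_pos L).le n

lemma exp_sq_div_four_le_cubicMechanism (hγ : γ ≤ 2) {n : ℕ} {L : ℝ} (hL : L ≤ (n : ℝ) ^ 3) :
    exp ((γ - 2) * (n : ℝ) ^ 3 - (n : ℝ) ^ 2 + 2 * L) / 4 ≤ cubicMechanism γ (exp L) := by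
  have hx : exp L * cubicAtom n ≤ 1 := by
    rw [exp_mul_cubicAtom, exp_le_one_iff]; linarith
  calc exp ((γ - 2) * (n : ℝ) ^ 3 - (n : ℝ) ^ 2 + 2 * L) / 4
      = cubicWeight γ n * ((exp L * cubicAtom n) ^ 2 / 4) := by
        have h := cubicWeight_mul_cubicAtom_pow γ n 2
        rw [Nat.cast_ofNat] at h
        rw [exp_add, two_mul, exp_add, ← h]; ring
    _ ≤ cubicWeight γ n * lkIntegrand (exp L * cubicAtom n) :=
        mul_le_mul_of_nonneg_left (sq_div_four_le_lkIntegrand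
          (mul_nonneg (exp_pos L).le (cubicAtom_pos n).le) hx)
          (cubicWeight_nonneg γ n)
    _ ≤ _ := mul_lkIntegrand_le_atomicMechanism (cubicWeight_nonneg γ) (cubicAtom_pos · |>.le)
        (summable_cubicWeight_mul_cubicAtom_sq hγ) (exp_pos L).le n

lemma eventually_two_mul_add_one_le (hγ : 1 < γ) :
    ∀ᶠ n : ℕ in atTop, 2 * (n : ℝ) + 1 ≤ (γ - 1) * (n : ℝ) ^ 2 := by
  filter_upwards [tendsto_natCast_atTop_atTop.eventually_ge_atTop (3 / (γ - 1)),
    eventually_ge_atTop 1] with n hn hn1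
  have hn1' : (1 : ℝ) ≤ n := by exact_mod_cast hn1
  have h3 : 3 ≤ (γ - 1) * n := by rwa [div_le_iff₀ (by linarith), mul_comm] at hn
  nlinarith

lemma eventually_cubicMechanism_le (hγ1 : 1 < γ) (hγ2 : γ ≤ 2) :
    ∀ᶠ n : ℕ in atTop, ∀ L : ℝ, cubicMechanism γ (exp L) ≤
      2 * exp ((γ - 1) * (n : ℝ) ^ 3 - (n : ℝ) ^ 2 + L) +
        2 * exp ((γ - 2) * ((n : ℝ) + 1) ^ 3 - ((n : ℝ) + 1) ^ 2 + 2 * L) := by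
  filter_upwards [eventually_two_mul_add_one_le hγ1] with n hn L
  have hhead := sum_cubicWeight_mul_cubicAtom_le hn
  have htail := tsum_cubicWeight_mul_cubicAtom_sq_le hγ2 (n + 1)
  push_cast at htail
  calc cubicMechanism γ (exp L)
      ≤ exp L * (2 * exp ((γ - 1) * (n : ℝ) ^ 3 - (n : ℝ) ^ 2)) +
          exp L ^ 2 * (2 * exp ((γ - 2) * ((n : ℝ) + 1) ^ 3 - ((n : ℝ) + 1) ^ 2)) := by
        refine (atomicMechanism_le_head_add_tail (cubicWeight_nonneg γ) (cubicAtom_pos · |>.le)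
          (summable_cubicWeight_mul_cubicAtom_sq hγ2) (exp_pos L).le (n + 1)).trans ?_
        gcongr
    _ = _ := by rw [exp_add, exp_add, two_mul L, exp_add]; ring

lemma tendsto_cubicMechanism_mul_rpow_atTop (hγ : γ ≤ 2) (hc : c < γ) :
    Tendsto (fun l => cubicMechanism γ l * l ^ (-c)) atTop atTop := by
  rw [← tendsto_comp_exp_atTop]
  simp_rw [← exp_mul]
  refine tendsto_atTop_of_le_on_cubes
    (g := fun n => exp ((γ - c) * (n : ℝ) ^ 3 - 4 * ((n : ℝ) + 1) ^ 2) / 4)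
    ((tendsto_exp_atTop.comp (tendsto_mul_cube_sub_sq (sub_pos.mpr hc))).atTop_div_const
      (by norm_num)) (Eventually.of_forall fun n L hL => ?_)
  rcases le_max_iff.mp (growth_exponent_le_max hc hγ n.cast_nonneg hL) with h | h
  · calc exp ((γ - c) * (n : ℝ) ^ 3 - 4 * ((n : ℝ) + 1) ^ 2) / 4
        ≤ exp ((γ - 1) * (n : ℝ) ^ 3 - (n : ℝ) ^ 2 + L) / 4 * exp (L * -c) := by
          rw [div_mul_eq_mul_div, ← exp_add]; gcongr; linarith
      _ ≤ _ := by gcongr; exact exp_div_four_le_cubicMechanism hγ hL.1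
  · have hsq := exp_sq_div_four_le_cubicMechanism hγ (n := n + 1) (L := L)
      (by push_cast; exact hL.2)
    push_cast at hsq
    calc exp ((γ - c) * (n : ℝ) ^ 3 - 4 * ((n : ℝ) + 1) ^ 2) / 4
        ≤ exp ((γ - 2) * ((n : ℝ) + 1) ^ 3 - ((n : ℝ) + 1) ^ 2 + 2 * L) / 4 * exp (L * -c) := by
          rw [div_mul_eq_mul_div, ← exp_add]; gcongr; linarith
      _ ≤ _ := by gcongr

lemma tendsto_cubicMechanism_mul_rpow_zero (hγ1 : 1 < γ) (hγ2 : γ ≤ 2) (hc : γ < c) :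
    Tendsto (fun l => cubicMechanism γ l * l ^ (-c)) atTop (𝓝 0) := by
  rw [← tendsto_comp_exp_atTop]
  simp_rw [← exp_mul]
  have hcube : Tendsto (fun n : ℕ => (n : ℝ) ^ 3) atTop atTop :=
    (tendsto_pow_atTop three_ne_zero).comp tendsto_natCast_atTop_atTop
  refine tendsto_zero_of_le_on_cubes (g := fun n => 4 * exp ((γ - c) * (n : ℝ) ^ 3))
    (by simpa using (tendsto_exp_atBot.comp (hcube.const_mul_atTop_of_neg
      (sub_neg.mpr hc))).const_mul 4) ?_
  filter_upwards [eventually_cubicMechanism_le hγ1 hγ2] with n hn L hL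
  obtain ⟨h1, h2⟩ := decay_exponents_le hc.le (by linarith) hγ2 hL
  refine ⟨mul_nonneg (atomicMechanism_nonneg (cubicWeight_nonneg γ) _) (exp_pos _).le, ?_⟩
  calc cubicMechanism γ (exp L) * exp (L * -c)
      ≤ (2 * exp ((γ - 1) * (n : ℝ) ^ 3 - (n : ℝ) ^ 2 + L) +
          2 * exp ((γ - 2) * ((n : ℝ) + 1) ^ 3 - ((n : ℝ) + 1) ^ 2 + 2 * L)) * exp (L * -c) := by
        gcongr; exact hn L
    _ = 2 * exp ((γ - 1) * (n : ℝ) ^ 3 - (n : ℝ) ^ 2 + (1 - c) * L) +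
          2 * exp ((γ - 2) * ((n : ℝ) + 1) ^ 3 - ((n : ℝ) + 1) ^ 2 + (2 - c) * L) := by
        simp only [add_mul, mul_assoc, ← exp_add]; ring_nf
    _ ≤ 4 * exp ((γ - c) * (n : ℝ) ^ 3) := by
        linarith [exp_le_exp.mpr h1, exp_le_exp.mpr h2]

lemma exists_cubicMechanism_scaling_violation (hγ1 : 1 < γ) (hγ2 : γ ≤ 2) (hc : 1 < c) {Q : ℝ}
    (hQ : 0 < Q) : ∃ u v : ℝ, 1 ≤ u ∧ u ≤ v ∧
      cubicMechanism γ v * v ^ (-c) < Q * (cubicMechanism γ u * u ^ (-c)) := by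
  have hsmall : Tendsto (fun n : ℕ => 16 * exp ((1 - c) * n)) atTop (𝓝 0) := by
    simpa using (tendsto_exp_atBot.comp (tendsto_natCast_atTop_atTop.const_mul_atTop_of_neg
      (by linarith : 1 - c < 0))).const_mul 16
  obtain ⟨n, hn, hnQ⟩ :=
    ((eventually_cubicMechanism_le hγ1 hγ2).and (hsmall.eventually (gt_mem_nhds hQ))).exists
  set α := (γ - 1) * (n : ℝ) ^ 3 - (n : ℝ) ^ 2
  refine ⟨exp ((n : ℝ) ^ 3), exp ((n : ℝ) ^ 3 + n), one_le_exp (by positivity),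
    exp_le_exp.mpr (by linarith [n.cast_nonneg (α := ℝ)]), ?_⟩
  simp_rw [← exp_mul]
  have hv : cubicMechanism γ (exp ((n : ℝ) ^ 3 + n)) ≤ 4 * exp (α + ((n : ℝ) ^ 3 + n)) := by
    have htail : (γ - 2) * ((n : ℝ) + 1) ^ 3 - ((n : ℝ) + 1) ^ 2 + 2 * ((n : ℝ) ^ 3 + n) ≤
        α + ((n : ℝ) ^ 3 + n) := by
      nlinarith [mul_le_mul_of_nonneg_left (by nlinarith [n.cast_nonneg (α := ℝ)] :
        (n : ℝ) ^ 3 ≤ ((n : ℝ) + 1) ^ 3) (by linarith : 0 ≤ 2 - γ)]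
    linarith [hn ((n : ℝ) ^ 3 + n), exp_le_exp.mpr htail]
  have hu := exp_div_four_le_cubicMechanism hγ2 (le_refl ((n : ℝ) ^ 3))
  calc cubicMechanism γ (exp ((n : ℝ) ^ 3 + n)) * exp (((n : ℝ) ^ 3 + n) * -c)
      ≤ 4 * exp (α + ((n : ℝ) ^ 3 + n)) * exp (((n : ℝ) ^ 3 + n) * -c) := by gcongr
    _ = 16 * exp ((1 - c) * n) * (exp (α + (n : ℝ) ^ 3) / 4 * exp ((n : ℝ) ^ 3 * -c)) := by
        have hexp : exp (α + ((n : ℝ) ^ 3 + n)) * exp (((n : ℝ) ^ 3 + n) * -c) =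
            exp ((1 - c) * n) * (exp (α + (n : ℝ) ^ 3) * exp ((n : ℝ) ^ 3 * -c)) := by
          simp only [← exp_add]; ring_nf
        rw [mul_assoc 4, hexp]; ring
    _ < Q * (exp (α + (n : ℝ) ^ 3) / 4 * exp ((n : ℝ) ^ 3 * -c)) := by gcongr
    _ ≤ _ := by gcongr

end CubicMechanism

/-- For any γ ∈ (1,2] there is a branching mechanism ψ of
Lévy–Khintchine form with γ_ψ = η_ψ = γ but δ_ψ = 1. -/
theorem exists_branching_mechanism_delta_one (γ : ℝ) (hγ1 : 1 < γ) (hγ2 : γ ≤ 2) :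
    ∃ ν : Measure ℝ, ν (Set.Iic 0) = 0 ∧
      Integrable (fun r => min r (r ^ 2)) ν ∧
      ∃ ψ : ℝ → ℝ,
        (∀ l : ℝ, 0 ≤ l → ψ l = ∫ r, (Real.exp (-(l * r)) - 1 + l * r) ∂ν) ∧
        -- lower exponent of ψ at infinity equals γ
        sSup {c : ℝ | 0 ≤ c ∧
          Tendsto (fun l : ℝ => ψ l * l ^ (-c)) atTop atTop} = γ ∧
        -- upper exponent of ψ at infinity equals γ
        sInf {c : ℝ | 0 ≤ c ∧
          Tendsto (fun l : ℝ => ψ l * l ^ (-c)) atTop (nhds 0)} = γ ∧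
        -- the exponent δ_ψ equals 1
        sSup {c : ℝ | 0 ≤ c ∧ ∃ Q : ℝ, 0 < Q ∧
          ∀ u v : ℝ, 1 ≤ u → u ≤ v →
            Q * (ψ u * u ^ (-c)) ≤ ψ v * v ^ (-c)} = 1 := by
  have ha := cubicWeight_nonneg γ
  have hr : ∀ n, 0 ≤ cubicAtom n := fun n => (cubicAtom_pos n).le
  have hs := summable_cubicWeight_mul_cubicAtom_sq hγ2
  have hlow : ∀ c, 0 ≤ c → c < γ → _ := fun c _ hc => tendsto_cubicMechanism_mul_rpow_atTop hγ2 hc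
  have hup : ∀ c, γ < c → _ := fun c hc => tendsto_cubicMechanism_mul_rpow_zero hγ1 hγ2 hc
  exact ⟨atomicMeasure (cubicWeight γ) cubicAtom, atomicMeasure_Iic_zero cubicAtom_pos,
    integrable_min_sq_atomicMeasure ha hr hs, cubicMechanism γ,
    fun l hl => atomicMechanism_eq_integral ha hr hs hl,
    sSup_setOf_tendsto_atTop_eq (by linarith) hlow hup,
    sInf_setOf_tendsto_zero_eq (by linarith) hlow hup,
    sSup_setOf_scaling_eq_one (atomicMechanism_div_monotoneOn ha cubicAtom_pos hs)
      fun c hc Q hQ => exists_cubicMechanism_scaling_violation hγ1 hγ2 hc hQ⟩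
end
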